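/- arXiv:1601.07147 — 7 statements merged into one kernel-verified Lean document; each statement's English description precedes it below -/
import Mathlib

section
/- Let T be a simplicial tree, let G be a group acting on T by graph automorphisms with exactly N < ∞ orbits of vertices, and let R_0 be a G-invariant decoration of T with neighbor refinement sequence (R_i). Then: (a) if R_{s+1} = R_s for some s ≥ 0, then R_i = R_s for all i ≥ s; and (b) there exists s ≤ N such that R_i = R_s for all i ≥ s. -/
/-- The neighbor refinement sequence of a relation `R0` on the vertices of a graph `G`. -/
def nbhdRefine {V : Type*} (G : SimpleGraph V) (R0 : V → V → Prop) : ℕ → V → V → Prop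
  | 0 => R0
  | (i + 1) => fun v w => R0 v w ∧ ∀ u : V,
      {x : V | G.Adj v x ∧ nbhdRefine G R0 i x u}.encard =
      {x : V | G.Adj w x ∧ nbhdRefine G R0 i x u}.encard

/-!
Every `R_i` is `Γ`-invariant, so its classes are unions of orbits and it has at most `N` classes.
Since `R_{i+1}` refines `R_i` (a class of `R_i` is a finite disjoint union of classes of
`R_{i+1}`, so neighbor counts for `R_{i+1}` determine those for `R_i`), the number of classes
is nondecreasing, and it increases strictly at every step where the sequence changes. It can
therefore change at most `N` times, and once `R_{s+1} = R_s` the recursion freezes it.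
-/

namespace Setoid

variable {α : Type*}

lemma map_of_le_surjective {r s : Setoid α} (h : r ≤ s) : Function.Surjective (map_of_le h) :=
  Quotient.ind fun x => ⟨Quotient.mk r x, rfl⟩

lemma finite_quotient_of_le {r s : Setoid α} (h : r ≤ s) [Finite (Quotient r)] :
    Finite (Quotient s) :=
  Finite.of_surjective _ (map_of_le_surjective h)

lemma card_quotient_le_of_le {r s : Setoid α} (h : r ≤ s) [Finite (Quotient r)] :
    Nat.card (Quotient s) ≤ Nat.card (Quotient r) :=
  Nat.card_le_card_of_surjective _ (map_of_le_surjective h)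

lemma card_quotient_lt_of_lt {r s : Setoid α} (h : r < s) [Finite (Quotient r)] :
    Nat.card (Quotient s) < Nat.card (Quotient r) := by
  refine (card_quotient_le_of_le h.le).lt_of_ne fun hcard => ?_
  have hinj := ((map_of_le_surjective h.le).bijective_of_nat_card_le hcard.ge).injective
  exact h.not_ge fun x y hxy => Quotient.exact (hinj (Quotient.sound hxy))

lemma exists_le_card_succ_eq_of_antitone {r : ℕ → Setoid α} (hr : Antitone r) {s : Setoid α}
    [Finite (Quotient s)] (hs : ∀ i, s ≤ r i) :
    ∃ n ≤ Nat.card (Quotient s), r (n + 1) = r n := by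
  by_contra! hne
  have hfin (i : ℕ) : Finite (Quotient (r i)) := finite_quotient_of_le (hs i)
  have hgrow : ∀ n ≤ Nat.card (Quotient s) + 1, n ≤ Nat.card (Quotient (r n)) := by
    intro n
    induction n with
    | zero => exact fun _ => Nat.zero_le _
    | succ n ih =>
      intro hn
      have hlt : r (n + 1) < r n := (hr n.le_succ).lt_of_ne (hne n (by omega))
      have := card_quotient_lt_of_lt hlt
      have := ih (by omega)
      omega
  have := card_quotient_le_of_le (hs (Nat.card (Quotient s) + 1))
  have := hgrow _ le_rfl
  omega

lemma encard_inter_eq_finsum {S R : Setoid α} (hSR : S ≤ R) [Finite (Quotient S)]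
    (A : Set α) (u : α) :
    (A ∩ {x | R x u}).encard =
      ∑ᶠ c : {c : Quotient S // R c.out u}, (A ∩ {x | S x c.1.out}).encard := by
  rw [← Set.encard_iUnion_of_finite]
  · congr 1
    ext x
    simp only [Set.mem_inter_iff, Set.mem_ofPred_eq, Set.mem_iUnion, Subtype.exists, exists_prop]
    constructor
    · rintro ⟨hxA, hxu⟩
      have hx : S x (Quotient.mk S x).out := S.symm (Quotient.mk_out x)
      exact ⟨Quotient.mk S x, R.trans (R.symm (hSR hx)) hxu, hxA, hx⟩
    · rintro ⟨c, hcu, hxA, hxc⟩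
      exact ⟨hxA, R.trans (hSR hxc) hcu⟩
  · intro c c' hne
    refine Set.disjoint_left.2 fun x hxc hxc' => hne (Subtype.ext ?_)
    rw [← c.1.out_eq, ← c'.1.out_eq]
    exact Quotient.sound (S.trans (S.symm hxc.2) hxc'.2)

lemma encard_inter_eq_of_le {S R : Setoid α} (hSR : S ≤ R) [Finite (Quotient S)] {A B : Set α}
    (h : ∀ u, (A ∩ {x | S x u}).encard = (B ∩ {x | S x u}).encard) (u : α) :
    (A ∩ {x | R x u}).encard = (B ∩ {x | R x u}).encard := by
  rw [encard_inter_eq_finsum hSR, encard_inter_eq_finsum hSR]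
  exact finsum_congr fun c => h c.1.out

end Setoid

section NeighborRefinement

open scoped Pointwise

variable {V : Type*} (G : SimpleGraph V) {R0 : V → V → Prop}

lemma nbhdRefine_succ_eq_of_eq {i j : ℕ} (h : nbhdRefine G R0 i = nbhdRefine G R0 j) :
    nbhdRefine G R0 (i + 1) = nbhdRefine G R0 (j + 1) := by
  rw [nbhdRefine, nbhdRefine, h]

lemma nbhdRefine_eq_of_succ_eq {s : ℕ} (hs : nbhdRefine G R0 (s + 1) = nbhdRefine G R0 s)
    {i : ℕ} (hi : s ≤ i) : nbhdRefine G R0 i = nbhdRefine G R0 s := by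
  induction i, hi using Nat.le_induction with
  | base => rfl
  | succ i _ ih => exact (nbhdRefine_succ_eq_of_eq G ih).trans hs

lemma equivalence_nbhdRefine (hR0 : Equivalence R0) : ∀ i, Equivalence (nbhdRefine G R0 i)
  | 0 => hR0
  | _ + 1 =>
    { refl := fun v => ⟨hR0.refl v, fun _ => rfl⟩
      symm := fun h => ⟨hR0.symm h.1, fun u => (h.2 u).symm⟩
      trans := fun h₁ h₂ =>
        ⟨hR0.trans h₁.1 h₂.1, fun u => (h₁.2 u).trans (h₂.2 u)⟩ }

def nbhdSetoid (hR0 : Equivalence R0) (i : ℕ) : Setoid V :=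
  ⟨nbhdRefine G R0 i, equivalence_nbhdRefine G hR0 i⟩

lemma nbhdSetoid_succ_le (hR0 : Equivalence R0)
    (hfin : ∀ i, Finite (Quotient (nbhdSetoid G hR0 i))) (i : ℕ) :
    nbhdSetoid G hR0 (i + 1) ≤ nbhdSetoid G hR0 i := by
  induction i with
  | zero => exact fun _ _ h => h.1
  | succ i ih =>
    intro v w h
    exact ⟨h.1, Setoid.encard_inter_eq_of_le (A := G.neighborSet v) (B := G.neighborSet w)
      ih h.2⟩

lemma antitone_nbhdSetoid (hR0 : Equivalence R0)
    (hfin : ∀ i, Finite (Quotient (nbhdSetoid G hR0 i))) : Antitone (nbhdSetoid G hR0) :=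
  antitone_nat_of_succ_le (nbhdSetoid_succ_le G hR0 hfin)

variable {Γ : Type*} [Group Γ] [MulAction Γ V]

lemma neighborSet_smul (hact : ∀ (g : Γ) (u v : V), G.Adj u v → G.Adj (g • u) (g • v))
    (g : Γ) (v : V) : G.neighborSet (g • v) = g • G.neighborSet v := by
  ext x
  rw [Set.mem_smul_set_iff_inv_smul_mem, SimpleGraph.mem_neighborSet, SimpleGraph.mem_neighborSet]
  exact ⟨fun h => by simpa using hact g⁻¹ _ _ h, fun h => by simpa using hact g _ _ h⟩

lemma nbhdRefine_smul_right (hact : ∀ (g : Γ) (u v : V), G.Adj u v → G.Adj (g • u) (g • v))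
    (hR0 : Equivalence R0) (hinv : ∀ (g : Γ) (v : V), R0 v (g • v)) :
    ∀ (i : ℕ) (g : Γ) (v : V), nbhdRefine G R0 i v (g • v)
  | 0 => hinv
  | i + 1 => fun g v => ⟨hinv g v, fun u => by
    have hR := equivalence_nbhdRefine G hR0 i
    have hclass : g • {x | nbhdRefine G R0 i x u} = {x | nbhdRefine G R0 i x u} := by
      ext x
      have hx := nbhdRefine_smul_right hact hR0 hinv i g⁻¹ x
      rw [Set.mem_smul_set_iff_inv_smul_mem, Set.mem_ofPred_eq, Set.mem_ofPred_eq]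
      exact ⟨hR.trans hx, hR.trans (hR.symm hx)⟩
    change (G.neighborSet v ∩ {x | nbhdRefine G R0 i x u}).encard
      = (G.neighborSet (g • v) ∩ {x | nbhdRefine G R0 i x u}).encard
    rw [neighborSet_smul G hact, ← hclass, ← Set.smul_set_inter, Set.encard_smul_set, hclass]⟩

lemma orbitRel_le_nbhdSetoid
    (hact : ∀ (g : Γ) (u v : V), G.Adj u v → G.Adj (g • u) (g • v))
    (hR0 : Equivalence R0) (hinv : ∀ (g : Γ) (v : V), R0 v (g • v)) (i : ℕ) :
    MulAction.orbitRel Γ V ≤ nbhdSetoid G hR0 i := by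
  rintro _ w ⟨g, rfl⟩
  exact (equivalence_nbhdRefine G hR0 i).symm (nbhdRefine_smul_right G hact hR0 hinv i g w)

end NeighborRefinement

theorem neighbor_refinement_stabilizes_general
    {V : Type*} (G : SimpleGraph V)
    {Γ : Type*} [Group Γ] [MulAction Γ V]
    (hact : ∀ (g : Γ) (u v : V), G.Adj u v → G.Adj (g • u) (g • v))
    (N : ℕ)
    (hfin : Finite (Quotient (MulAction.orbitRel Γ V)))
    (hN : Nat.card (Quotient (MulAction.orbitRel Γ V)) = N)
    (R0 : V → V → Prop) (hR0 : Equivalence R0)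
    (hinv : ∀ (g : Γ) (v : V), R0 v (g • v)) :
    (∀ s : ℕ, (∀ v w : V, nbhdRefine G R0 (s + 1) v w ↔ nbhdRefine G R0 s v w) →
      ∀ i : ℕ, s ≤ i → ∀ v w : V, nbhdRefine G R0 i v w ↔ nbhdRefine G R0 s v w) ∧
    (∃ s : ℕ, s ≤ N ∧ ∀ i : ℕ, s ≤ i →
      ∀ v w : V, nbhdRefine G R0 i v w ↔ nbhdRefine G R0 s v w) := by
  have stable_of_succ_eq {s : ℕ} (hs : nbhdRefine G R0 (s + 1) = nbhdRefine G R0 s) (i : ℕ)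
      (hi : s ≤ i) (v w : V) : nbhdRefine G R0 i v w ↔ nbhdRefine G R0 s v w := by
    rw [nbhdRefine_eq_of_succ_eq G hs hi]
  refine ⟨fun s hs => stable_of_succ_eq (funext₂ fun v w => propext (hs v w)), ?_⟩
  have hle := orbitRel_le_nbhdSetoid G hact hR0 hinv
  have hfin_i (i : ℕ) : Finite (Quotient (nbhdSetoid G hR0 i)) :=
    Setoid.finite_quotient_of_le (hle i)
  obtain ⟨s, hsN, hs⟩ :=
    Setoid.exists_le_card_succ_eq_of_antitone (antitone_nbhdSetoid G hR0 hfin_i) hle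
  exact ⟨s, hN ▸ hsN, stable_of_succ_eq (congrArg (@Setoid.r V) hs)⟩

/-- For a cocompact action with `N` orbits of vertices and a `G`-invariant initial decoration:
(a) once the neighbor refinement sequence is constant at one step, it is constant forever; and
(b) the sequence stabilizes at some index `s ≤ N`. -/
theorem neighbor_refinement_stabilizes
    {V : Type*} (G : SimpleGraph V) (hT : G.IsTree)
    {Γ : Type*} [Group Γ] [MulAction Γ V]
    (hact : ∀ (g : Γ) (u v : V), G.Adj u v → G.Adj (g • u) (g • v))
    (N : ℕ)
    (hfin : Finite (Quotient (MulAction.orbitRel Γ V)))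
    (hN : Nat.card (Quotient (MulAction.orbitRel Γ V)) = N)
    (R0 : V → V → Prop) (hR0 : Equivalence R0)
    (hinv : ∀ (g : Γ) (v : V), R0 v (g • v)) :
    (∀ s : ℕ, (∀ v w : V, nbhdRefine G R0 (s + 1) v w ↔ nbhdRefine G R0 s v w) →
      ∀ i : ℕ, s ≤ i → ∀ v w : V, nbhdRefine G R0 i v w ↔ nbhdRefine G R0 s v w) ∧
    (∃ s : ℕ, s ≤ N ∧ ∀ i : ℕ, s ≤ i →
      ∀ v w : V, nbhdRefine G R0 i v w ↔ nbhdRefine G R0 s v w) :=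
  neighbor_refinement_stabilizes_general G hact N hfin hN R0 hR0 hinv
end

section
/- Let T be a simplicial tree in which every vertex has at most countably many neighbors, let a group G act on T by graph automorphisms with finitely many orbits of vertices, and let R_0 be a G-invariant decoration of T with neighbor refinement sequence (R_i); this sequence is eventually constant, and we let R denote its eventual value. Then for all vertices v and w of T the following are equivalent: (i) R v w; (ii) there exists a graph automorphism χ of T with χ(v) = w such that R_0 u (χ u) holds for every vertex u; (iii) there exists a graph automorphism χ of T with χ(v) = w such that R u (χ u) holds for every vertex u. -/
open Set

theorem Set.Countable.nonempty_equiv_of_encard_eq {α : Type*} {s t : Set α} (hs : s.Countable)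
    (ht : t.Countable) (h : s.encard = t.encard) : Nonempty (s ≃ t) := by
  have := hs.to_subtype
  have := ht.to_subtype
  exact Cardinal.eq.1 <| (Cardinal.toENat_eq_iff_of_le_aleph0 Cardinal.mk_le_aleph0
    Cardinal.mk_le_aleph0).1 h

theorem Equiv.exists_bijOn_extending {α : Type*} {s t : Set α} (e : s ≃ t) :
    ∃ f : α → α, BijOn f s t ∧ ∀ x : s, f x = e x := by
  classical
  refine ⟨fun x => if hx : x ∈ s then e ⟨x, hx⟩ else x, ⟨fun x hx => by simp [hx], ?_, ?_⟩,
    fun x => by simp⟩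
  · intro x hx y hy hxy
    exact congrArg Subtype.val (e.injective <| Subtype.ext <| by simpa [hx, hy] using hxy)
  · intro y hy
    exact ⟨e.symm ⟨y, hy⟩, (e.symm ⟨y, hy⟩).2, by simp⟩

theorem exists_bijOn_fiberwise_of_encard_eq {α β : Type*} {A B : Set α} (π : α → β)
    (hA : A.Countable) (hB : B.Countable)
    (h : ∀ c, (A ∩ π ⁻¹' {c}).encard = (B ∩ π ⁻¹' {c}).encard) :
    ∃ f : α → α, BijOn f A B ∧ ∀ x ∈ A, π (f x) = π x := by
  have fiber (C : Set α) (c : β) : {x : C // π x = c} ≃ ↥(C ∩ π ⁻¹' {c}) :=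
    Equiv.subtypeSubtypeEquivSubtypeInter (· ∈ C) (π · = c)
  have e (c : β) : {x : A // π x = c} ≃ {y : B // π y = c} :=
    ((fiber A c).trans (hA.mono inter_subset_left |>.nonempty_equiv_of_encard_eq
      (hB.mono inter_subset_left) (h c)).some).trans (fiber B c).symm
  obtain ⟨f, hf, hfe⟩ := (Equiv.ofFiberEquiv e).exists_bijOn_extending
  exact ⟨f, hf, fun x hx => by rw [hfe ⟨x, hx⟩]; exact Equiv.ofFiberEquiv_map e ⟨x, hx⟩⟩

theorem exists_bijOn_forall_rel_of_encard_inter_eq {α : Type*} {R : α → α → Prop}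
    (hR : Equivalence R) {A B : Set α} (hA : A.Countable) (hB : B.Countable)
    (h : ∀ u, (A ∩ {x | R x u}).encard = (B ∩ {x | R x u}).encard) :
    ∃ f : α → α, BijOn f A B ∧ ∀ x ∈ A, R x (f x) := by
  let S : Setoid α := ⟨R, hR⟩
  have hfiber (u : α) : Quotient.mk S ⁻¹' {Quotient.mk S u} = {x | R x u} :=
    ext fun _ => Quotient.eq
  obtain ⟨f, hf, hfR⟩ := exists_bijOn_fiberwise_of_encard_eq (Quotient.mk S) hA hB
    (Quotient.ind fun u => by rw [hfiber]; exact h u)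
  exact ⟨f, hf, fun x hx => Quotient.exact (hfR x hx).symm⟩

namespace SimpleGraph

variable {V : Type*} {G : SimpleGraph V}

open Classical in
/-- The neighbour of `u` one step closer to `r`. Junk value: a vertex with no such neighbour
(in a connected graph, only `r` itself) is its own parent. -/
noncomputable def parent (G : SimpleGraph V) (r u : V) : V :=
  if h : ∃ p, G.Adj u p ∧ G.dist r p + 1 = G.dist r u then h.choose else u

def children (G : SimpleGraph V) (r p : V) : Set V :=
  {x | x ≠ r ∧ G.parent r x = p}

lemma parent_spec {r u : V} (h : ∃ p, G.Adj u p ∧ G.dist r p + 1 = G.dist r u) :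
    G.Adj u (G.parent r u) ∧ G.dist r (G.parent r u) + 1 = G.dist r u := by
  rw [parent, dif_pos h]
  exact h.choose_spec

@[simp] lemma parent_self (r : V) : G.parent r r = r := by
  simp [parent]

lemma Connected.exists_adj_dist_add_one (hG : G.Connected) {r u : V} (hu : u ≠ r) :
    ∃ p, G.Adj u p ∧ G.dist r p + 1 = G.dist r u := by
  obtain ⟨W, hW⟩ := hG.exists_walk_length_eq_dist u r
  cases W with
  | nil => exact absurd rfl hu
  | @cons _ p _ hadj W =>
    refine ⟨p, hadj, ?_⟩
    have hp : G.dist r p ≤ W.length := dist_comm (G := G) ▸ dist_le W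
    rw [Walk.length_cons, dist_comm] at hW
    have := hadj.symm.diff_dist_adj (u := r)
    omega

lemma Connected.adj_parent (hG : G.Connected) {r u : V} (hu : u ≠ r) :
    G.Adj u (G.parent r u) :=
  (parent_spec (hG.exists_adj_dist_add_one hu)).1

lemma Connected.dist_parent_add_one (hG : G.Connected) {r u : V} (hu : u ≠ r) :
    G.dist r (G.parent r u) + 1 = G.dist r u :=
  (parent_spec (hG.exists_adj_dist_add_one hu)).2

lemma Connected.adj_parent_iff (hG : G.Connected) {r u : V} :
    G.Adj u (G.parent r u) ↔ u ≠ r := by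
  refine ⟨?_, hG.adj_parent⟩
  rintro h rfl
  simp at h

theorem Connected.parent_induction (hG : G.Connected) (r : V) {P : V → Prop} (root : P r)
    (step : ∀ u, u ≠ r → P (G.parent r u) → P u) (u : V) : P u := by
  induction hd : G.dist r u using Nat.strong_induction_on generalizing u with
  | _ n ih =>
    by_cases hu : u = r
    · exact hu ▸ root
    · exact step u hu (ih _ (hd ▸ hG.dist_parent_add_one hu ▸ Nat.lt_succ_self _) _ rfl)

lemma IsTree.eq_penultimate_of_adj (hG : G.IsTree) {r u p : V} {Q : G.Walk r u} (hQ : Q.IsPath)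
    (hadj : G.Adj u p) (hd : G.dist r p < G.dist r u) : p = Q.penultimate := by
  classical
  obtain ⟨P, hP, hPlen⟩ := hG.connected.exists_path_of_dist r p
  have hu : u ∉ P.support := fun hmem => by
    have := dist_le (P.takeUntil u hmem)
    have := P.length_takeUntil_le_length hmem
    omega
  exact hG.isAcyclic.eq_penultimate_of_adj_end hQ hadj
    (hG.isAcyclic.mem_support_of_ne_mem_support_of_adj_of_isPath hQ hP hadj hu)

lemma IsTree.eq_parent (hG : G.IsTree) {r u p : V} (hadj : G.Adj u p)
    (hd : G.dist r p + 1 = G.dist r u) : p = G.parent r u := by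
  obtain ⟨Q, hQ, -⟩ := hG.connected.exists_path_of_dist r u
  have hpar := parent_spec ⟨p, hadj, hd⟩
  rw [hG.eq_penultimate_of_adj hQ hadj (by omega),
    hG.eq_penultimate_of_adj hQ hpar.1 (by omega)]

lemma IsTree.adj_iff (hG : G.IsTree) (r : V) {a b : V} :
    G.Adj a b ↔ (b ≠ r ∧ G.parent r b = a) ∨ (a ≠ r ∧ G.parent r a = b) := by
  refine ⟨fun h => ?_, ?_⟩
  · rcases hG.dist_eq_dist_add_one_of_adj r h with hd | hd
    · refine Or.inr ⟨?_, (hG.eq_parent h hd.symm).symm⟩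
      rintro rfl
      simp at hd
    · refine Or.inl ⟨?_, (hG.eq_parent h.symm hd.symm).symm⟩
      rintro rfl
      simp at hd
  · rintro (⟨hb, rfl⟩ | ⟨ha, rfl⟩)
    exacts [(hG.connected.adj_parent hb).symm, hG.connected.adj_parent ha]

lemma IsTree.neighborSet_sdiff_parent (hG : G.IsTree) (r a : V) :
    G.neighborSet a \ {G.parent r a} = G.children r a := by
  ext x
  simp only [mem_sdiff, mem_neighborSet, mem_singleton_iff, children, mem_ofPred_eq, hG.adj_iff r]
  constructor
  · rintro ⟨h | ⟨-, h⟩, hx⟩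
    exacts [h, absurd h.symm hx]
  · rintro ⟨hx, rfl⟩
    refine ⟨Or.inl ⟨hx, rfl⟩, fun h => ?_⟩
    by_cases hp : G.parent r x = r
    · rw [hp, parent_self] at h
      exact hx h
    · have hpx := hG.connected.dist_parent_add_one hx
      have hpp := hG.connected.dist_parent_add_one hp
      rw [← h] at hpp
      omega

section TreeLift

variable (G) in
/-- `treeLiftAux m v w n` is only meant to be evaluated at vertices at distance `n` from `v`. -/
noncomputable def treeLiftAux (m : V → V → V → V) (v w : V) : ℕ → V → V
  | 0 => fun _ => w
  | n + 1 => fun u => m (G.parent v u) (treeLiftAux m v w n (G.parent v u)) u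

variable (G) in
noncomputable def treeLift (m : V → V → V → V) (v w u : V) : V :=
  G.treeLiftAux m v w (G.dist v u) u

variable {m : V → V → V → V} {v w : V}

@[simp] lemma treeLift_self : G.treeLift m v w v = w := by
  simp [treeLift, treeLiftAux]

lemma Connected.treeLift_of_ne (hG : G.Connected) {u : V} (hu : u ≠ v) :
    G.treeLift m v w u = m (G.parent v u) (G.treeLift m v w (G.parent v u)) u := by
  rw [treeLift, ← hG.dist_parent_add_one hu]
  rfl

variable {R : V → V → Prop}
  (hm : ∀ a b, R a b → BijOn (m a b) (G.children v a) (G.children w b) ∧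
    ∀ x ∈ G.children v a, R x (m a b x))
  (hvw : R v w)
include hm hvw

lemma Connected.treeLift_rel (hG : G.Connected) (u : V) : R u (G.treeLift m v w u) := by
  induction u using hG.parent_induction v with
  | root => rwa [treeLift_self]
  | step u hu ih =>
    rw [hG.treeLift_of_ne hu]
    exact (hm _ _ ih).2 u ⟨hu, rfl⟩

lemma Connected.treeLift_mem_children (hG : G.Connected) {u : V} (hu : u ≠ v) :
    G.treeLift m v w u ∈ G.children w (G.treeLift m v w (G.parent v u)) := by
  rw [hG.treeLift_of_ne hu]
  exact (hm _ _ (hG.treeLift_rel hm hvw _)).1.mapsTo ⟨hu, rfl⟩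

lemma Connected.treeLift_injective (hG : G.Connected) : Function.Injective (G.treeLift m v w) := by
  have hχ {u : V} (hu : u ≠ v) := hG.treeLift_mem_children hm hvw hu
  intro u₁ u₂ h
  induction u₁ using hG.parent_induction v generalizing u₂ with
  | root =>
    by_contra hne
    exact (hχ (Ne.symm hne)).1 (h.symm.trans treeLift_self)
  | step u hu ih =>
    have hu₂ : u₂ ≠ v := by
      rintro rfl
      exact (hχ hu).1 (h.trans treeLift_self)
    have hpar : G.parent v u = G.parent v u₂ :=
      ih (by rw [← (hχ hu).2, ← (hχ hu₂).2, h])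
    refine (hm _ _ (hG.treeLift_rel hm hvw _)).1.injOn ⟨hu, rfl⟩ ⟨hu₂, hpar.symm⟩ ?_
    rwa [← hG.treeLift_of_ne (m := m) (w := w) hu, hpar,
      ← hG.treeLift_of_ne (m := m) (w := w) hu₂]

lemma Connected.treeLift_surjective (hG : G.Connected) :
    Function.Surjective (G.treeLift m v w) := by
  intro y
  induction y using hG.parent_induction w with
  | root => exact ⟨v, treeLift_self⟩
  | step y hy ih =>
    obtain ⟨p, hp⟩ := ih
    obtain ⟨x, hx, rfl⟩ := (hm _ _ (hG.treeLift_rel hm hvw p)).1.surjOn ⟨hy, hp.symm⟩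
    exact ⟨x, by rw [hG.treeLift_of_ne hx.1, hx.2]⟩

lemma IsTree.treeLift_adj_iff (hG : G.IsTree) {a b : V} :
    G.Adj (G.treeLift m v w a) (G.treeLift m v w b) ↔ G.Adj a b := by
  have hinj := hG.connected.treeLift_injective hm hvw
  have hparent (a b : V) : (G.treeLift m v w b ≠ w ∧
      G.parent w (G.treeLift m v w b) = G.treeLift m v w a) ↔ (b ≠ v ∧ G.parent v b = a) := by
    have hroot : G.treeLift m v w b = w ↔ b = v := by
      simpa using hinj.eq_iff (a := b) (b := v)
    rw [Ne, hroot]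
    refine and_congr_right fun hb => ?_
    rw [(hG.connected.treeLift_mem_children hm hvw hb).2, hinj.eq_iff]
  rw [hG.adj_iff w, hG.adj_iff v, hparent, hparent]

theorem IsTree.exists_iso_of_bijOn_children (hG : G.IsTree) :
    ∃ χ : G ≃g G, χ v = w ∧ ∀ u, R u (χ u) :=
  ⟨⟨Equiv.ofBijective _ ⟨hG.connected.treeLift_injective hm hvw,
      hG.connected.treeLift_surjective hm hvw⟩, hG.treeLift_adj_iff hm hvw⟩,
    treeLift_self, hG.connected.treeLift_rel hm hvw⟩

end TreeLift

section Equitable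

variable {R : V → V → Prop}

def IsEquitable (G : SimpleGraph V) (R : V → V → Prop) : Prop :=
  ∀ a b, R a b → ∀ u,
    (G.neighborSet a ∩ {x | R x u}).encard = (G.neighborSet b ∩ {x | R x u}).encard

lemma IsEquitable.encard_neighborSet_sdiff_inter_eq (hE : G.IsEquitable R) (hR : Equivalence R)
    {a b p q : V} (hab : R a b) (hpq : R p q) (hadj : G.Adj a p ↔ G.Adj b q) (u : V) :
    ((G.neighborSet a \ {p}) ∩ {x | R x u}).encard =
      ((G.neighborSet b \ {q}) ∩ {x | R x u}).encard := by
  rw [sdiff_inter_right_comm, sdiff_inter_right_comm]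
  by_cases hp : p ∈ G.neighborSet a ∩ {x | R x u}
  · have hq : q ∈ G.neighborSet b ∩ {x | R x u} := ⟨hadj.1 hp.1, hR.trans (hR.symm hpq) hp.2⟩
    rw [encard_sdiff_singleton_of_mem hp, encard_sdiff_singleton_of_mem hq, hE a b hab u]
  · have hq : q ∉ G.neighborSet b ∩ {x | R x u} := fun hq => hp ⟨hadj.2 hq.1, hR.trans hpq hq.2⟩
    rw [sdiff_singleton_eq_self hp, sdiff_singleton_eq_self hq, hE a b hab u]

lemma IsTree.exists_bijOn_children (hG : G.IsTree) (hcount : ∀ v, (G.neighborSet v).Countable)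
    (hR : Equivalence R) (hE : G.IsEquitable R) {v w a b : V} (hab : R a b)
    (hpar : R (G.parent v a) (G.parent w b)) (hroot : a = v ↔ b = w) :
    ∃ f : V → V, BijOn f (G.children v a) (G.children w b) ∧ ∀ x ∈ G.children v a, R x (f x) := by
  rw [← hG.neighborSet_sdiff_parent, ← hG.neighborSet_sdiff_parent]
  refine exists_bijOn_forall_rel_of_encard_inter_eq hR ((hcount a).mono sdiff_subset)
    ((hcount b).mono sdiff_subset) (hE.encard_neighborSet_sdiff_inter_eq hR hab hpar ?_)
  rw [hG.connected.adj_parent_iff, hG.connected.adj_parent_iff, Ne, Ne, hroot]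

theorem IsTree.exists_iso_of_isEquitable (hG : G.IsTree)
    (hcount : ∀ v, (G.neighborSet v).Countable) (hR : Equivalence R) (hE : G.IsEquitable R)
    {v w : V} (hvw : R v w) : ∃ χ : G ≃g G, χ v = w ∧ ∀ u, R u (χ u) := by
  let R' (a b : V) : Prop := R a b ∧ R (G.parent v a) (G.parent w b) ∧ (a = v ↔ b = w)
  have hmatch (a b : V) (hab : R' a b) : ∃ f : V → V, BijOn f (G.children v a) (G.children w b) ∧
      ∀ x ∈ G.children v a, R' x (f x) := by
    obtain ⟨f, hf, hfR⟩ := hG.exists_bijOn_children hcount hR hE hab.1 hab.2.1 hab.2.2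
    refine ⟨f, hf, fun x hx => ⟨hfR x hx, ?_, iff_of_false hx.1 (hf.mapsTo hx).1⟩⟩
    rw [hx.2, (hf.mapsTo hx).2]
    exact hab.1
  have : Nonempty (V → V) := ⟨id⟩
  choose! m hm using hmatch
  obtain ⟨χ, hχv, hχ⟩ :=
    hG.exists_iso_of_bijOn_children hm ⟨hvw, by simpa using hvw, iff_of_true rfl rfl⟩
  exact ⟨χ, hχv, fun u => (hχ u).1⟩

end Equitable

end SimpleGraph

section NbhdRefine

variable {V : Type*} {G : SimpleGraph V} {R0 : V → V → Prop}

lemma nbhdRefine_equivalence (hR0 : Equivalence R0) (i : ℕ) :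
    Equivalence (nbhdRefine G R0 i) := by
  induction i with
  | zero => exact hR0
  | succ i ih =>
    exact ⟨fun x => ⟨hR0.refl x, fun _ => rfl⟩, fun h => ⟨hR0.symm h.1, fun u => (h.2 u).symm⟩,
      fun h h' => ⟨hR0.trans h.1 h'.1, fun u => (h.2 u).trans (h'.2 u)⟩⟩

lemma rel_of_nbhdRefine {i : ℕ} {v w : V} (h : nbhdRefine G R0 i v w) : R0 v w := by
  cases i with
  | zero => exact h
  | succ i => exact h.1

lemma nbhdRefine_iso_apply (hR0 : Equivalence R0) (χ : G ≃g G) (hχ : ∀ u, R0 u (χ u)) (i : ℕ)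
    (u : V) : nbhdRefine G R0 i u (χ u) := by
  induction i generalizing u with
  | zero => exact hχ u
  | succ i ih =>
    refine ⟨hχ u, fun u₀ => ?_⟩
    have hR := nbhdRefine_equivalence (G := G) hR0 i
    have himage : χ '' {x | G.Adj u x ∧ nbhdRefine G R0 i x u₀} =
        {x | G.Adj (χ u) x ∧ nbhdRefine G R0 i x u₀} := by
      ext y
      obtain ⟨x, rfl⟩ := χ.surjective y
      simp only [χ.injective.mem_set_image, mem_ofPred_eq, χ.map_adj_iff]
      exact and_congr_right fun _ => ⟨hR.trans (hR.symm (ih x)), hR.trans (ih x)⟩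
    rw [← himage, χ.injective.encard_image]

lemma isEquitable_nbhdRefine_of_succ_iff {s : ℕ}
    (hs : ∀ v w, nbhdRefine G R0 (s + 1) v w ↔ nbhdRefine G R0 s v w) :
    G.IsEquitable (nbhdRefine G R0 s) :=
  fun a b hab => ((hs a b).2 hab).2

end NbhdRefine

theorem neighbor_refinement_gives_aut_orbits_general
    {V : Type*} (G : SimpleGraph V) (hT : G.IsTree)
    (hcount : ∀ v : V, (G.neighborSet v).Countable)
    (R0 : V → V → Prop) (hR0 : Equivalence R0)
    (s : ℕ)
    (hs : ∀ i : ℕ, s ≤ i → ∀ v w : V,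
      nbhdRefine G R0 i v w ↔ nbhdRefine G R0 s v w) :
    ∀ v w : V,
      (nbhdRefine G R0 s v w ↔ ∃ χ : G ≃g G, χ v = w ∧ ∀ u : V, R0 u (χ u)) ∧
      (nbhdRefine G R0 s v w ↔
        ∃ χ : G ≃g G, χ v = w ∧ ∀ u : V, nbhdRefine G R0 s u (χ u)) := by
  intro v w
  have lift : nbhdRefine G R0 s v w →
      ∃ χ : G ≃g G, χ v = w ∧ ∀ u, nbhdRefine G R0 s u (χ u) :=
    hT.exists_iso_of_isEquitable hcount (nbhdRefine_equivalence hR0 s)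
      (isEquitable_nbhdRefine_of_succ_iff (hs (s + 1) s.le_succ))
  refine ⟨⟨fun h => ?_, ?_⟩, ⟨lift, ?_⟩⟩
  · obtain ⟨χ, hχv, hχ⟩ := lift h
    exact ⟨χ, hχv, fun u => rel_of_nbhdRefine (hχ u)⟩
  · rintro ⟨χ, rfl, hχ⟩
    exact nbhdRefine_iso_apply hR0 χ hχ s v
  · rintro ⟨χ, rfl, hχ⟩
    exact hχ v

/-- For a tree with countable valences, a cocompact group action by graph automorphisms and an
invariant initial decoration `R0`, the stable neighbor refinement `R = R_s` identifies two
vertices exactly when some decoration-preserving automorphism carries one to the other; the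
automorphism may equivalently be required to preserve the initial decoration `R0` or the stable
decoration `R`. -/
theorem neighbor_refinement_gives_aut_orbits
    {V : Type*} (G : SimpleGraph V) (hT : G.IsTree)
    (hcount : ∀ v : V, (G.neighborSet v).Countable)
    {Γ : Type*} [Group Γ] [MulAction Γ V]
    (hact : ∀ (g : Γ) (u v : V), G.Adj u v → G.Adj (g • u) (g • v))
    (hfin : Finite (Quotient (MulAction.orbitRel Γ V)))
    (R0 : V → V → Prop) (hR0 : Equivalence R0)
    (hinv : ∀ (g : Γ) (v : V), R0 v (g • v))
    (s : ℕ)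
    (hs : ∀ i : ℕ, s ≤ i → ∀ v w : V,
      nbhdRefine G R0 i v w ↔ nbhdRefine G R0 s v w) :
    ∀ v w : V,
      (nbhdRefine G R0 s v w ↔ ∃ χ : G ≃g G, χ v = w ∧ ∀ u : V, R0 u (χ u)) ∧
      (nbhdRefine G R0 s v w ↔
        ∃ χ : G ≃g G, χ v = w ∧ ∀ u : V, nbhdRefine G R0 s u (χ u)) :=
  neighbor_refinement_gives_aut_orbits_general G hT hcount R0 hR0 s hs
end

section
/- Let (X,d) be a metric space, let A ≥ 0 and M ≥ 1 be real numbers, and let (x_i), indexed by the integers, be a family of points of X such that: (i) |d(x_i, x_j) − d(x_0, x_{j−i})| ≤ A for all integers i ≤ j; (ii) |d(x_0, x_{i+j}) − d(x_0, x_i) − d(x_0, x_j)| ≤ A for all integers i, j ≥ 0; and (iii) d(x_0, x_i) ≥ i/M − A for all integers i ≥ 0. Then the limit L of d(x_0, x_i)/i as i → ∞ exists, satisfies L ≥ 1/M, and |d(x_0, x_i) − L·i| ≤ 2A for all i ≥ 0; consequently |d(x_i, x_j) − L·(j − i)| ≤ 3A for all integers i ≤ j. -/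
/-- The metric core of the lemma on almost-symmetric embeddings: if a family of points
`x : ℤ → X` satisfies (i) coarse translation invariance, (ii) coarse additivity and (iii) a
lower quasi-geodesic bound, then `d(x 0, x i)/i` converges to a limit `L ≥ 1/M`, the map
`i ↦ x i` is an `(L, 2A)`-coarse similitude from the base point, and consequently
`|d(x i, x j) − L(j−i)| ≤ 3A` for all `i ≤ j`. -/
theorem coarse_similitude_of_almost_additive
    {X : Type*} [MetricSpace X] (A M : ℝ) (hA : 0 ≤ A) (hM : 1 ≤ M)
    (x : ℤ → X)
    (h1 : ∀ i j : ℤ, i ≤ j → |dist (x i) (x j) - dist (x 0) (x (j - i))| ≤ A)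
    (h2 : ∀ i j : ℤ, 0 ≤ i → 0 ≤ j →
      |dist (x 0) (x (i + j)) - dist (x 0) (x i) - dist (x 0) (x j)| ≤ A)
    (h3 : ∀ i : ℤ, 0 ≤ i → (i : ℝ) / M - A ≤ dist (x 0) (x i)) :
    ∃ L : ℝ, 1 / M ≤ L ∧
      Filter.Tendsto (fun n : ℕ => dist (x 0) (x (n : ℤ)) / (n : ℝ))
        Filter.atTop (nhds L) ∧
      (∀ i : ℤ, 0 ≤ i → |dist (x 0) (x i) - L * (i : ℝ)| ≤ 2 * A) ∧
      (∀ i j : ℤ, i ≤ j → |dist (x i) (x j) - L * ((j : ℝ) - (i : ℝ))| ≤ 3 * A) := by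
  set d : ℕ → ℝ := fun n => dist (x 0) (x (n : ℤ)) with hd
  have hM0 : (0:ℝ) < M := lt_of_lt_of_le zero_lt_one hM
  have hd2 : ∀ m n : ℕ, |d (m + n) - d m - d n| ≤ A := by
    intro m n
    have := h2 (m : ℤ) (n : ℤ) (Int.ofNat_nonneg m) (Int.ofNat_nonneg n)
    simpa [d] using this
  have hd3 : ∀ n : ℕ, (n : ℝ) / M - A ≤ d n := by
    intro n
    have := h3 (n : ℤ) (Int.ofNat_nonneg n)
    simpa [d] using this
  have hdnn : ∀ n, 0 ≤ d n := fun n => dist_nonneg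
  have hd0 : d 0 = 0 := by simp [d]
  -- the subadditive sequence `u n = d n + A`
  set u : ℕ → ℝ := fun n => d n + A with hu
  have hsub : Subadditive u := by
    intro m n
    have := (abs_le.1 (hd2 m n)).2
    simp only [u]; linarith
  have hubdd : BddBelow (Set.range fun n : ℕ => u n / n) := by
    refine ⟨0, ?_⟩
    rintro y ⟨n, rfl⟩
    have : 0 ≤ u n := by have := hdnn n; simp only [u]; linarith
    positivity
  set L := hsub.lim with hL
  have htend : Filter.Tendsto (fun n : ℕ => u n / n) Filter.atTop (nhds L) :=
    hsub.tendsto_lim hubdd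
  have hAdiv : Filter.Tendsto (fun n : ℕ => A / (n : ℝ)) Filter.atTop (nhds 0) :=
    Filter.Tendsto.div_atTop tendsto_const_nhds tendsto_natCast_atTop_atTop
  -- `d n / n → L`
  have htendd : Filter.Tendsto (fun n : ℕ => d n / (n : ℝ)) Filter.atTop (nhds L) := by
    have heq : (fun n : ℕ => d n / (n : ℝ)) = fun n : ℕ => u n / n - A / n := by
      funext n; simp only [u]; ring
    rw [heq]
    simpa using htend.sub hAdiv
  -- `L ≥ 1/M`
  have hLM : 1 / M ≤ L := by
    have hlow : Filter.Tendsto (fun n : ℕ => 1 / M - A / (n : ℝ)) Filter.atTop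
        (nhds (1 / M)) := by simpa using (tendsto_const_nhds.sub hAdiv)
    refine le_of_tendsto_of_tendsto hlow htendd ?_
    filter_upwards [Filter.eventually_gt_atTop 0] with n hn
    have hn' : (0:ℝ) < (n : ℝ) := by exact_mod_cast hn
    have h' := hd3 n
    have key : ((n : ℝ) / M - A) / n ≤ d n / n := by gcongr
    calc 1 / M - A / (n : ℝ) = ((n : ℝ) / M - A) / n := by field_simp
      _ ≤ d n / n := key
  -- lower bound: `L * n ≤ d n + A` for `n ≥ 1`
  have hlower : ∀ n : ℕ, n ≠ 0 → L * n ≤ d n + A := by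
    intro n hn
    have h' := hsub.lim_le_div hubdd hn
    have hn' : (0:ℝ) < (n : ℝ) := by exact_mod_cast Nat.pos_of_ne_zero hn
    rw [le_div_iff₀ hn'] at h'
    simpa [u, mul_comm] using h'
  -- the subadditive sequence `w n = A - d n`
  set w : ℕ → ℝ := fun n => A - d n with hw
  have hwsub : Subadditive w := by
    intro m n
    have := (abs_le.1 (hd2 m n)).1
    simp only [w]; linarith
  have hwbdd : BddBelow (Set.range fun n : ℕ => w n / n) := by
    refine ⟨-(d 1 + A), ?_⟩
    rintro y ⟨n, rfl⟩
    rcases Nat.eq_zero_or_pos n with rfl | hn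
    · simp only [Nat.cast_zero, div_zero]
      have := hdnn 1; linarith
    · have hn' : (0:ℝ) < (n : ℝ) := by exact_mod_cast hn
      have hub : d n ≤ n * (d 1 + A) := by
        have h' := hsub.apply_mul_add_le n 1 0
        have h'' : d n + A ≤ n * (d 1 + A) + (d 0 + A) := by
          simpa [u] using h'
        rw [hd0] at h''
        linarith
      rw [le_div_iff₀ hn']
      simp only [w]
      linarith
  have hwtend : Filter.Tendsto (fun n : ℕ => w n / n) Filter.atTop (nhds hwsub.lim) :=
    hwsub.tendsto_lim hwbdd
  have hwtend' : Filter.Tendsto (fun n : ℕ => w n / n) Filter.atTop (nhds (-L)) := by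
    have heq : (fun n : ℕ => w n / n) = fun n : ℕ => A / n - d n / n := by
      funext n; simp only [w]; ring
    rw [heq]
    simpa using hAdiv.sub htendd
  have hwlim : hwsub.lim = -L := tendsto_nhds_unique hwtend hwtend'
  -- upper bound: `d n ≤ L * n + A` for `n ≥ 1`
  have hupper : ∀ n : ℕ, n ≠ 0 → d n ≤ L * n + A := by
    intro n hn
    have h' := hwsub.lim_le_div hwbdd hn
    rw [hwlim] at h'
    have hn' : (0:ℝ) < (n : ℝ) := by exact_mod_cast Nat.pos_of_ne_zero hn
    rw [le_div_iff₀ hn'] at h'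
    simp only [w] at h'
    nlinarith
  -- the coarse similitude bound for naturals
  have hnat : ∀ n : ℕ, |d n - L * n| ≤ 2 * A := by
    intro n
    rcases Nat.eq_zero_or_pos n with rfl | hn
    · simp [hd0, hA]
    · have h₁ := hlower n hn.ne'
      have h₂ := hupper n hn.ne'
      rw [abs_le]; constructor <;> linarith
  have hint : ∀ i : ℤ, 0 ≤ i → |dist (x 0) (x i) - L * (i : ℝ)| ≤ 2 * A := by
    intro i hi
    obtain ⟨n, rfl⟩ := Int.eq_ofNat_of_zero_le hi
    simpa [d] using hnat n
  refine ⟨L, hLM, htendd, hint, ?_⟩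
  intro i j hij
  have h₁ := h1 i j hij
  have h₂ := hint (j - i) (by omega)
  have hcast : ((j - i : ℤ) : ℝ) = (j : ℝ) - (i : ℝ) := by push_cast; ring
  rw [hcast] at h₂
  calc |dist (x i) (x j) - L * ((j : ℝ) - (i : ℝ))|
      ≤ |dist (x i) (x j) - dist (x 0) (x (j - i))|
        + |dist (x 0) (x (j - i)) - L * ((j : ℝ) - (i : ℝ))| := by
        exact abs_sub_le _ _ _
    _ ≤ A + 2 * A := add_le_add h₁ h₂
    _ = 3 * A := by ring
end

section
/- Let G be a group and let z₀, z₁, z₂ be elements of G of infinite order such that each pairwise intersection ⟨z_i⟩ ∩ ⟨z_j⟩ (i ≠ j) has finite index in both ⟨z_i⟩ and ⟨z_j⟩. Then [⟨z₁⟩ : ⟨z₀⟩∩⟨z₁⟩] · [⟨z₂⟩ : ⟨z₁⟩∩⟨z₂⟩] · [⟨z₀⟩ : ⟨z₂⟩∩⟨z₀⟩] = [⟨z₀⟩ : ⟨z₀⟩∩⟨z₁⟩] · [⟨z₁⟩ : ⟨z₁⟩∩⟨z₂⟩] · [⟨z₂⟩ : ⟨z₂⟩∩⟨z₀⟩] as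 natural numbers. Equivalently, the modulus Δ̂(a,b) := [⟨b⟩ : ⟨a⟩∩⟨b⟩]/[⟨a⟩ : ⟨a⟩∩⟨b⟩] satisfies the cocycle identity Δ̂(z₀,z₁)·Δ̂(z₁,z₂) = Δ̂(z₀,z₂). -/
/-!
Write `[Y : X]` for `X.relIndex Y`, the index of `X ∩ Y` in `Y`. For `D = A ∩ B ∩ C`,
multiplicativity of relative indices along `D ≤ A ∩ B ≤ B` gives
`[A ∩ B : D] · [B : A ∩ B] = [B : D]`, and likewise for the other five ordered pairs. Multiplying
the three relations of each orientation of the triangle `A → B → C → A`, both products of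
relative indices times the same factor `[A ∩ B : D] · [B ∩ C : D] · [C ∩ A : D]` equal
`[A : D] · [B : D] · [C : D]`. This factor is nonzero as soon as one side of the identity is,
since finite relative index is transitive.
-/

namespace Subgroup

variable {G : Type*} [Group G] (A B C : Subgroup G)

theorem relIndex_cycle_eq_of_inf_ne_zero (hAB : C.relIndex (A ⊓ B) ≠ 0)
    (hBC : A.relIndex (B ⊓ C) ≠ 0) (hCA : B.relIndex (C ⊓ A) ≠ 0) :
    A.relIndex B * B.relIndex C * C.relIndex A = B.relIndex A * C.relIndex B * A.relIndex C := by
  have e₀₁ := relIndex_inf_mul_relIndex C A B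
  have e₁₂ := relIndex_inf_mul_relIndex A B C
  have e₂₀ := relIndex_inf_mul_relIndex B C A
  have e₁₀ := relIndex_inf_mul_relIndex C B A
  have e₂₁ := relIndex_inf_mul_relIndex A C B
  have e₀₂ := relIndex_inf_mul_relIndex B A C
  rw [inf_comm B A, inf_comm C B] at e₁₀
  rw [inf_comm C B, inf_comm A C] at e₂₁
  rw [inf_comm A C, inf_comm B A] at e₀₂
  refine Nat.eq_of_mul_eq_mul_left
    (Nat.pos_of_ne_zero (mul_ne_zero (mul_ne_zero hAB hBC) hCA)) ?_
  calc C.relIndex (A ⊓ B) * A.relIndex (B ⊓ C) * B.relIndex (C ⊓ A) *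
        (A.relIndex B * B.relIndex C * C.relIndex A)
      = (C ⊓ A).relIndex B * (A ⊓ B).relIndex C * (B ⊓ C).relIndex A := by
        rw [← e₀₁, ← e₁₂, ← e₂₀]; ring
    _ = C.relIndex (A ⊓ B) * A.relIndex (B ⊓ C) * B.relIndex (C ⊓ A) *
        (B.relIndex A * C.relIndex B * A.relIndex C) := by
        rw [← e₁₀, ← e₂₁, ← e₀₂]; ring

theorem relIndex_cycle_eq_of_ne_zero (hAB : A.relIndex B ≠ 0) (hBC : B.relIndex C ≠ 0)
    (hCA : C.relIndex A ≠ 0) :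
    A.relIndex B * B.relIndex C * C.relIndex A = B.relIndex A * C.relIndex B * A.relIndex C :=
  relIndex_cycle_eq_of_inf_ne_zero A B C
    (mt (relIndex_eq_zero_of_le_right inf_le_right) (relIndex_ne_zero_trans hCA hAB))
    (mt (relIndex_eq_zero_of_le_right inf_le_right) (relIndex_ne_zero_trans hAB hBC))
    (mt (relIndex_eq_zero_of_le_right inf_le_right) (relIndex_ne_zero_trans hBC hCA))

theorem relIndex_cycle_eq :
    A.relIndex B * B.relIndex C * C.relIndex A = B.relIndex A * C.relIndex B * A.relIndex C := by
  by_cases hl : A.relIndex B * B.relIndex C * C.relIndex A = 0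
  · by_cases hr : B.relIndex A * C.relIndex B * A.relIndex C = 0
    · rw [hl, hr]
    · simp only [mul_ne_zero_iff] at hr
      have := relIndex_cycle_eq_of_ne_zero A C B hr.2 hr.1.2 hr.1.1
      linarith
  · simp only [mul_ne_zero_iff] at hl
    exact relIndex_cycle_eq_of_ne_zero A B C hl.1.1 hl.1.2 hl.2

end Subgroup

theorem modulus_cocycle_general {G : Type*} [Group G] (z₀ z₁ z₂ : G)
    (h10 : (Subgroup.zpowers z₁).relIndex (Subgroup.zpowers z₀) ≠ 0)
    (h21 : (Subgroup.zpowers z₂).relIndex (Subgroup.zpowers z₁) ≠ 0) :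
    (Subgroup.zpowers z₀).relIndex (Subgroup.zpowers z₁) *
        (Subgroup.zpowers z₁).relIndex (Subgroup.zpowers z₂) *
        (Subgroup.zpowers z₂).relIndex (Subgroup.zpowers z₀) =
      (Subgroup.zpowers z₁).relIndex (Subgroup.zpowers z₀) *
        (Subgroup.zpowers z₂).relIndex (Subgroup.zpowers z₁) *
        (Subgroup.zpowers z₀).relIndex (Subgroup.zpowers z₂) ∧
    (((Subgroup.zpowers z₀).relIndex (Subgroup.zpowers z₁) : ℚ) /
          ((Subgroup.zpowers z₁).relIndex (Subgroup.zpowers z₀) : ℚ)) *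
        (((Subgroup.zpowers z₁).relIndex (Subgroup.zpowers z₂) : ℚ) /
          ((Subgroup.zpowers z₂).relIndex (Subgroup.zpowers z₁) : ℚ)) =
      ((Subgroup.zpowers z₀).relIndex (Subgroup.zpowers z₂) : ℚ) /
        ((Subgroup.zpowers z₂).relIndex (Subgroup.zpowers z₀) : ℚ) := by
  have h20 := Subgroup.relIndex_ne_zero_trans h21 h10
  have cycle := Subgroup.relIndex_cycle_eq (Subgroup.zpowers z₀) (Subgroup.zpowers z₁)
    (Subgroup.zpowers z₂)
  refine ⟨cycle, ?_⟩
  rw [div_mul_div_comm,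
    div_eq_div_iff (by exact_mod_cast mul_ne_zero h10 h21) (by exact_mod_cast h20)]
  exact_mod_cast cycle.trans (by ring)

/-- The cocycle identity for the modulus `Δ̂` on pairwise commensurable infinite cyclic
subgroups: writing `r a b = [⟨b⟩ : ⟨a⟩ ∩ ⟨b⟩] = (zpowers a).relIndex (zpowers b)`, we have
`r z₀ z₁ * r z₁ z₂ * r z₂ z₀ = r z₁ z₀ * r z₂ z₁ * r z₀ z₂`, equivalently
`Δ̂(z₀,z₁) · Δ̂(z₁,z₂) = Δ̂(z₀,z₂)` in `ℚ` where `Δ̂(a,b) = r a b / r b a`. -/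
theorem modulus_cocycle {G : Type*} [Group G] (z₀ z₁ z₂ : G)
    (h₀ : ¬ IsOfFinOrder z₀) (h₁ : ¬ IsOfFinOrder z₁) (h₂ : ¬ IsOfFinOrder z₂)
    (h01 : (Subgroup.zpowers z₀).relIndex (Subgroup.zpowers z₁) ≠ 0)
    (h10 : (Subgroup.zpowers z₁).relIndex (Subgroup.zpowers z₀) ≠ 0)
    (h12 : (Subgroup.zpowers z₁).relIndex (Subgroup.zpowers z₂) ≠ 0)
    (h21 : (Subgroup.zpowers z₂).relIndex (Subgroup.zpowers z₁) ≠ 0)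
    (h02 : (Subgroup.zpowers z₀).relIndex (Subgroup.zpowers z₂) ≠ 0)
    (h20 : (Subgroup.zpowers z₂).relIndex (Subgroup.zpowers z₀) ≠ 0) :
    (Subgroup.zpowers z₀).relIndex (Subgroup.zpowers z₁) *
        (Subgroup.zpowers z₁).relIndex (Subgroup.zpowers z₂) *
        (Subgroup.zpowers z₂).relIndex (Subgroup.zpowers z₀) =
      (Subgroup.zpowers z₁).relIndex (Subgroup.zpowers z₀) *
        (Subgroup.zpowers z₂).relIndex (Subgroup.zpowers z₁) *
        (Subgroup.zpowers z₀).relIndex (Subgroup.zpowers z₂) ∧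
    (((Subgroup.zpowers z₀).relIndex (Subgroup.zpowers z₁) : ℚ) /
          ((Subgroup.zpowers z₁).relIndex (Subgroup.zpowers z₀) : ℚ)) *
        (((Subgroup.zpowers z₁).relIndex (Subgroup.zpowers z₂) : ℚ) /
          ((Subgroup.zpowers z₂).relIndex (Subgroup.zpowers z₁) : ℚ)) =
      ((Subgroup.zpowers z₀).relIndex (Subgroup.zpowers z₂) : ℚ) /
        ((Subgroup.zpowers z₂).relIndex (Subgroup.zpowers z₀) : ℚ) :=
  modulus_cocycle_general z₀ z₁ z₂ h10 h21
end

section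
/- Let X and Y be metric spaces, let 𝒫 be a collection of subsets of X and 𝒫′ a collection of subsets of Y. Suppose μ: X → Y is a quasi-isometry respecting (𝒫, 𝒫′) with a coarse inverse μ̄: Y → X respecting (𝒫′, 𝒫), and suppose that for every quasi-isometry φ: X → X respecting (𝒫, 𝒫), the composition μ ∘ φ ∘ μ̄ is coarsely equivalent to some coarse isometry of Y. Then for every quasi-isometry μ′: X → Y respecting (𝒫, 𝒫′) with a coarse inverse respecting (𝒫′, 𝒫), the composition μ′ ∘ μ̄ : Y → Y is a coarse isometry, i.e. there exists C ≥ 0 such that it is a C-coarse isometry. -/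
/-- `f` is an `(M,A)`-quasi-isometry: an `(M,A)`-quasi-isometric embedding that is
`A`-coarsely surjective. -/
def IsQuasiIsometry {X Y : Type*} [MetricSpace X] [MetricSpace Y]
    (M A : ℝ) (f : X → Y) : Prop :=
  (∀ x y : X, dist x y / M - A ≤ dist (f x) (f y) ∧ dist (f x) (f y) ≤ M * dist x y + A) ∧
  ∀ y : Y, ∃ x : X, dist y (f x) ≤ A

/-- `f` is a `C`-coarse isometry: it distorts distances by at most the additive constant `C`
and is `C`-coarsely surjective. -/
def IsCoarseIsometry {X Y : Type*} [MetricSpace X] [MetricSpace Y]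
    (C : ℝ) (f : X → Y) : Prop :=
  (∀ x y : X, |dist (f x) (f y) - dist x y| ≤ C) ∧
  ∀ y : Y, ∃ x : X, dist y (f x) ≤ C

/-- `f` respects the patterns `(P, P')`: the image of each member of `P` is at finite
Hausdorff distance from some member of `P'`, and every member of `P'` is at finite Hausdorff
distance from the image of some member of `P`. -/
def RespectsPatterns {X Y : Type*} [MetricSpace X] [MetricSpace Y]
    (f : X → Y) (P : Set (Set X)) (P' : Set (Set Y)) : Prop :=
  (∀ S ∈ P, ∃ S' ∈ P', EMetric.hausdorffEdist (f '' S) S' ≠ ⊤) ∧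
  (∀ S' ∈ P', ∃ S ∈ P, EMetric.hausdorffEdist (f '' S) S' ≠ ⊤)

/-- A coarse-Lipschitz map sends sets at finite Hausdorff distance to sets at finite
Hausdorff distance. -/
lemma hd_image_ne_top {X Y : Type*} [MetricSpace X] [MetricSpace Y]
    (f : X → Y) (K L : ℝ) (hK : 0 ≤ K)
    (hf : ∀ a b : X, dist (f a) (f b) ≤ K * dist a b + L)
    {A B : Set X} (h : EMetric.hausdorffEdist A B ≠ ⊤) :
    EMetric.hausdorffEdist (f '' A) (f '' B) ≠ ⊤ := by
  set r := EMetric.hausdorffEdist A B + 1 with hr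
  have hrt : r ≠ ⊤ := ENNReal.add_ne_top.2 ⟨h, ENNReal.one_ne_top⟩
  have hlt : EMetric.hausdorffEdist A B < r := ENNReal.lt_add_right h one_ne_zero
  have key : ∀ x y : X, edist x y < r →
      edist (f x) (f y) ≤ ENNReal.ofReal (K * r.toReal + L) := by
    intro x y hxy
    have hd : dist x y ≤ r.toReal := by
      have := ENNReal.toReal_mono hrt hxy.le
      simpa [edist_dist, ENNReal.toReal_ofReal dist_nonneg] using this
    have hb : dist (f x) (f y) ≤ K * r.toReal + L := by
      have h1 := hf x y
      nlinarith [mul_le_mul_of_nonneg_left hd hK]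
    rw [edist_dist]
    exact ENNReal.ofReal_le_ofReal hb
  have hle : EMetric.hausdorffEdist (f '' A) (f '' B) ≤ ENNReal.ofReal (K * r.toReal + L) := by
    apply EMetric.hausdorffEdist_le_of_mem_edist
    · rintro _ ⟨x, hx, rfl⟩
      have h1 : EMetric.infEdist x B < r :=
        lt_of_le_of_lt (EMetric.infEdist_le_hausdorffEdist_of_mem hx) hlt
      obtain ⟨y, hy, hxy⟩ := EMetric.infEdist_lt_iff.1 h1
      exact ⟨f y, Set.mem_image_of_mem f hy, key x y hxy⟩
    · rintro _ ⟨y, hy, rfl⟩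
      have h1 : EMetric.infEdist y A < r := by
        refine lt_of_le_of_lt (EMetric.infEdist_le_hausdorffEdist_of_mem hy) ?_
        rwa [EMetric.hausdorffEdist_comm]
      obtain ⟨x, hx, hyx⟩ := EMetric.infEdist_lt_iff.1 h1
      refine ⟨f x, Set.mem_image_of_mem f hx, ?_⟩
      rw [edist_comm] at hyx ⊢
      exact key x y hyx
  exact ne_top_of_le_ne_top ENNReal.ofReal_ne_top hle

lemma hd_trans_ne_top {Y : Type*} [MetricSpace Y] {A B C : Set Y}
    (h1 : EMetric.hausdorffEdist A B ≠ ⊤) (h2 : EMetric.hausdorffEdist B C ≠ ⊤) :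
    EMetric.hausdorffEdist A C ≠ ⊤ :=
  ne_top_of_le_ne_top (ENNReal.add_ne_top.2 ⟨h1, h2⟩) EMetric.hausdorffEdist_triangle

/-- If `(X, P')` is a rigid model for `(X, P)` via the quasi-isometry `μ` (i.e. every
pattern-respecting self-quasi-isometry of `X` is conjugated by `μ` into a coarse isometry of
`Y` up to coarse equivalence), then for any other pattern-respecting quasi-isometry
`μ' : X → Y` with a pattern-respecting coarse inverse, the composition `μ' ∘ μ̄` is a coarse
isometry of `Y`. -/
theorem rigid_model_change_of_marking_is_coarse_isometry
    {X Y : Type*} [MetricSpace X] [MetricSpace Y]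
    (P : Set (Set X)) (P' : Set (Set Y))
    (μ : X → Y) (μbar : Y → X)
    (hμ : ∃ M A : ℝ, 1 ≤ M ∧ 0 ≤ A ∧ IsQuasiIsometry M A μ)
    (hμP : RespectsPatterns μ P P')
    (hμinv : ∃ C : ℝ, 0 ≤ C ∧ (∀ x : X, dist (μbar (μ x)) x ≤ C) ∧
      (∀ y : Y, dist (μ (μbar y)) y ≤ C))
    (hμbarP : RespectsPatterns μbar P' P)
    (hrigid : ∀ φ : X → X, (∃ M A : ℝ, 1 ≤ M ∧ 0 ≤ A ∧ IsQuasiIsometry M A φ) →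
      RespectsPatterns φ P P →
      ∃ ψ : Y → Y, (∃ C : ℝ, 0 ≤ C ∧ IsCoarseIsometry C ψ) ∧
        ∃ D : ℝ, ∀ y : Y, dist (μ (φ (μbar y))) (ψ y) ≤ D)
    (μ' : X → Y)
    (hμ' : ∃ M A : ℝ, 1 ≤ M ∧ 0 ≤ A ∧ IsQuasiIsometry M A μ')
    (hμ'P : RespectsPatterns μ' P P')
    (hμ'inv : ∃ ν : Y → X,
      (∃ C : ℝ, 0 ≤ C ∧ (∀ x : X, dist (ν (μ' x)) x ≤ C) ∧
        (∀ y : Y, dist (μ' (ν y)) y ≤ C)) ∧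
      RespectsPatterns ν P' P) :
    ∃ C : ℝ, 0 ≤ C ∧ IsCoarseIsometry C (fun y : Y => μ' (μbar y)) := by
  obtain ⟨M, A, hM, hA, ⟨hμemb, hμsurj⟩⟩ := hμ
  obtain ⟨M', A', hM', hA', ⟨hμ'emb, hμ'surj⟩⟩ := hμ'
  obtain ⟨C, hC, hCl, hCr⟩ := hμinv
  have hM0 : 0 < M := lt_of_lt_of_le one_pos hM
  have hM'0 : 0 < M' := lt_of_lt_of_le one_pos hM'
  -- μbar is coarse-Lipschitz
  have hbarlip : ∀ y y' : Y, dist (μbar y) (μbar y') ≤ M * dist y y' + M * (2*C + A) := by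
    intro y y'
    have h1 := (hμemb (μbar y) (μbar y')).1
    have h2 : dist (μ (μbar y)) (μ (μbar y')) ≤ dist y y' + 2*C := by
      have t1 := hCr y
      have t2 := hCr y'
      have t3 := dist_triangle4 (μ (μbar y)) y y' (μ (μbar y'))
      linarith [dist_comm y' (μ (μbar y'))]
    have h3 : dist (μbar y) (μbar y') / M ≤ dist y y' + 2*C + A := by linarith
    rw [div_le_iff₀ hM0] at h3
    nlinarith
  -- μbar expands distances at most boundedly from below
  have hbarlow : ∀ y y' : Y, dist y y' ≤ M * dist (μbar y) (μbar y') + (A + 2*C) := by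
    intro y y'
    have h1 := (hμemb (μbar y) (μbar y')).2
    have h2 : dist y y' ≤ dist (μ (μbar y)) (μ (μbar y')) + 2*C := by
      have t1 := hCr y
      have t2 := hCr y'
      have t3 := dist_triangle4 y (μ (μbar y)) (μ (μbar y')) y'
      linarith [dist_comm y (μ (μbar y)), dist_comm (μ (μbar y')) y']
    linarith
  set φ : X → X := fun x => μbar (μ' x) with hφ
  set M₀ : ℝ := M * M' with hM₀def
  set A₀ : ℝ := M * (A' + 2*C + A) + A' + A + 2*C with hA₀def
  have hM₀1 : (1:ℝ) ≤ M₀ := one_le_mul_of_one_le_of_one_le hM hM'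
  have hM₀0 : (0:ℝ) < M₀ := lt_of_lt_of_le one_pos hM₀1
  have hA₀0 : 0 ≤ A₀ := by positivity
  have hφQI : IsQuasiIsometry M₀ A₀ φ := by
    refine ⟨fun x y => ⟨?_, ?_⟩, ?_⟩
    · -- lower bound
      have e1 := hbarlow (μ' x) (μ' y)
      have e2 : dist x y ≤ M' * (dist (μ' x) (μ' y) + A') := by
        have h2 := (hμ'emb x y).1
        rw [sub_le_iff_le_add, div_le_iff₀ hM'0] at h2
        nlinarith
      rw [sub_le_iff_le_add, div_le_iff₀ hM₀0]
      show dist x y ≤ (dist (μbar (μ' x)) (μbar (μ' y)) + A₀) * M₀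
      have hb : (0:ℝ) ≤ dist (μbar (μ' x)) (μbar (μ' y)) := dist_nonneg
      have e3 : dist x y ≤ M * M' * dist (μbar (μ' x)) (μbar (μ' y)) + M' * (A + 2*C + A') := by
        nlinarith [mul_le_mul_of_nonneg_left e1 hM'0.le]
      have f1 : A + 2*C + A' ≤ A₀ := by rw [hA₀def]; nlinarith
      have f2 : A₀ ≤ A₀ * M := by nlinarith
      have f3 : M' * (A + 2*C + A') ≤ M' * (A₀ * M) :=
        mul_le_mul_of_nonneg_left (f1.trans f2) hM'0.le
      rw [hM₀def]
      nlinarith [e3, f3]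
    · -- upper bound
      have h1 := hbarlip (μ' x) (μ' y)
      have h2 := (hμ'emb x y).2
      show dist (μbar (μ' x)) (μbar (μ' y)) ≤ M₀ * dist x y + A₀
      rw [hA₀def, hM₀def]
      nlinarith
    · -- coarse surjectivity
      intro x
      obtain ⟨x', hx'⟩ := hμ'surj (μ x)
      refine ⟨x', ?_⟩
      have h1 : dist x (μbar (μ x)) ≤ C := by rw [dist_comm]; exact hCl x
      have h2 := hbarlip (μ x) (μ' x')
      have h3 := dist_triangle x (μbar (μ x)) (μbar (μ' x'))
      have h4 : M * dist (μ x) (μ' x') ≤ M * A' := mul_le_mul_of_nonneg_left hx' hM0.le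
      show dist x (μbar (μ' x')) ≤ A₀
      rw [hA₀def]
      nlinarith
  have hφP : RespectsPatterns φ P P := by
    have him : ∀ S : Set X, φ '' S = μbar '' (μ' '' S) := fun S => by
      rw [Set.image_image]
    constructor
    · intro S hS
      obtain ⟨S', hS', hSd⟩ := hμ'P.1 S hS
      obtain ⟨T, hT, hTd⟩ := hμbarP.1 S' hS'
      refine ⟨T, hT, ?_⟩
      rw [him]
      exact hd_trans_ne_top
        (hd_image_ne_top μbar M (M*(2*C+A)) hM0.le hbarlip hSd) hTd
    · intro T hT
      obtain ⟨S', hS', hS'd⟩ := hμbarP.2 T hT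
      obtain ⟨S, hS, hSd⟩ := hμ'P.2 S' hS'
      refine ⟨S, hS, ?_⟩
      rw [him]
      exact hd_trans_ne_top
        (hd_image_ne_top μbar M (M*(2*C+A)) hM0.le hbarlip hSd) hS'd
  obtain ⟨ψ, ⟨C₀, hC₀, hψemb, hψsurj⟩, D, hD⟩ := hrigid φ ⟨M₀, A₀, hM₀1, hA₀0, hφQI⟩ hφP
  set E : ℝ := max (C + D) 0 with hEdef
  have hE0 : 0 ≤ E := le_max_right _ _
  have hclose : ∀ y : Y, dist (μ' (μbar y)) (ψ y) ≤ E := by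
    intro y
    have h1 := hD y
    have h2 : dist (μ' (μbar y)) (μ (φ (μbar y))) ≤ C := by
      show dist (μ' (μbar y)) (μ (μbar (μ' (μbar y)))) ≤ C
      rw [dist_comm]
      exact hCr (μ' (μbar y))
    have h3 := dist_triangle (μ' (μbar y)) (μ (φ (μbar y))) (ψ y)
    have : dist (μ' (μbar y)) (ψ y) ≤ C + D := by linarith
    exact this.trans (le_max_left _ _)
  refine ⟨C₀ + 2*E, by linarith, fun y y' => ?_, fun y => ?_⟩
  · have h1 := hψemb y y'
    have h2 := hclose y
    have h3 := hclose y'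
    have h4 : |dist (μ' (μbar y)) (μ' (μbar y')) - dist (ψ y) (ψ y')| ≤
        dist (μ' (μbar y)) (ψ y) + dist (μ' (μbar y')) (ψ y') := by
      rw [← Real.dist_eq]
      exact dist_dist_dist_le _ _ _ _
    have h5 := abs_sub_le (dist (μ' (μbar y)) (μ' (μbar y'))) (dist (ψ y) (ψ y')) (dist y y')
    simp only []
    linarith
  · obtain ⟨z, hz⟩ := hψsurj y
    refine ⟨z, ?_⟩
    have h1 := hclose z
    have h2 := dist_triangle y (ψ z) (μ' (μbar z))
    rw [dist_comm (ψ z) (μ' (μbar z))] at h2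
    simp only []
    linarith
end

section
/- Let E and E′ be finite sets, let δ: E ⊔ E′ → Ω and δ′: E ⊔ E′ → Ω′ be functions such that δ′ refines δ (δ′(x) = δ′(y) implies δ(x) = δ(y)), and let s, s′: E ⊔ E′ → {−1, 0, 1} be functions such that s′ extends s (s(x) ≠ 0 implies s′(x) = s(x)) and such that the δ-partition is finer than the partition into oriented and unoriented elements (δ(x) = δ(y) implies that s(x) = 0 if and only if s(y) = 0). Then: (1) if there exists o ∈ Ω with Σ over {x ∈ E : δ(x) = o} of s(x) nonzero, then there exists o′ ∈ Ω′ with Σ over {x ∈ E : δ′(x) = o′} of s′(x) nonzero. (2) Suppose additionally that for every o ∈ Ω there exists x ∈ E with δ(x) = o and s(x) ≠ 0 if and only if there exists x ∈ E′ with δ(x) = o and s(x) ≠ 0. If there exists ε ∈ {−1, 1} such that for every o′ ∈ Ω′, Σ over {x ∈ E : δ′(x) = o′} of s′(x) equals ε times Σ over {x ∈ E′ : δ′(x) = o′} of s′(x), then there exists ε ∈ {−1, 1} such that for every o ∈ Ω, Σ over {x ∈ E : δ(x) = o} of s(x) equals ε times Σ over {x ∈ E′ : δ(x) = o} of s(x).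 -/
open Finset in
private lemma fiber_sum_imb {A Z Ω Ω' : Type*} [Fintype A] [Fintype Z] [DecidableEq Ω]
    [DecidableEq Ω'] (ι : A → Z) (δ : Z → Ω) (δ' : Z → Ω')
    (href : ∀ x y, δ' x = δ' y → δ x = δ y) (f : A → ℤ) (o : Ω) :
    ∑ a ∈ univ.filter (fun a => δ (ι a) = o), f a
      = ∑ o' ∈ (univ.filter (fun z => δ z = o)).image δ',
          ∑ a ∈ univ.filter (fun a => δ' (ι a) = o'), f a := by
  rw [← Finset.sum_fiberwise_of_maps_to (g := fun a => δ' (ι a))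
      (t := (univ.filter (fun z => δ z = o)).image δ')
      (fun a ha => by
        simp only [mem_filter, mem_univ, true_and] at ha
        exact mem_image.mpr ⟨ι a, by simp [ha], rfl⟩) f]
  refine Finset.sum_congr rfl fun o' ho' => Finset.sum_congr ?_ (fun _ _ => rfl)
  obtain ⟨z, hz, hz'⟩ := Finset.mem_image.mp ho'
  simp only [Finset.mem_filter, Finset.mem_univ, true_and] at hz
  ext a
  simp only [Finset.mem_filter, Finset.mem_univ, true_and]
  constructor
  · rintro ⟨-, h⟩; exact h
  · intro h; exact ⟨(href (ι a) z (hz'.symm ▸ h)).trans hz, h⟩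

/-- Orientation imbalances behave well under refinement of decorations and extension of
partial orientations: with `E`, `E'` the edge sets at two cylindrical vertices, `δ` a
decoration refined by `δ'`, and `s` the signs of the attaching maps (0 = unoriented) extended
by `s'`, (1) if the imbalance w.r.t. `(δ, s)` is nonzero then so is the imbalance w.r.t.
`(δ', s')`; and (2) under the matching-orientability hypothesis, if the two vertices have
equal imbalances w.r.t. `(δ', s')` (up to a global sign) then they have equal imbalances
w.r.t. `(δ, s)` (up to a global sign). -/
theorem imbalance_refinement
    {E E' Ω Ω' : Type*} [Fintype E] [Fintype E'] [DecidableEq Ω] [DecidableEq Ω']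
    (δ : E ⊕ E' → Ω) (δ' : E ⊕ E' → Ω')
    (href : ∀ x y : E ⊕ E', δ' x = δ' y → δ x = δ y)
    (s s' : E ⊕ E' → ℤ)
    (hs : ∀ x : E ⊕ E', s x = -1 ∨ s x = 0 ∨ s x = 1)
    (hs' : ∀ x : E ⊕ E', s' x = -1 ∨ s' x = 0 ∨ s' x = 1)
    (hext : ∀ x : E ⊕ E', s x ≠ 0 → s' x = s x)
    (hfine : ∀ x y : E ⊕ E', δ x = δ y → (s x = 0 ↔ s y = 0)) :
    ((∃ o : Ω,
        (∑ x ∈ Finset.univ.filter (fun e : E => δ (Sum.inl e) = o), s (Sum.inl x)) ≠ 0) →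
      ∃ o' : Ω',
        (∑ x ∈ Finset.univ.filter (fun e : E => δ' (Sum.inl e) = o'), s' (Sum.inl x)) ≠ 0) ∧
    ((∀ o : Ω, (∃ x : E, δ (Sum.inl x) = o ∧ s (Sum.inl x) ≠ 0) ↔
        (∃ x : E', δ (Sum.inr x) = o ∧ s (Sum.inr x) ≠ 0)) →
      (∃ ε : ℤ, (ε = 1 ∨ ε = -1) ∧ ∀ o' : Ω',
        (∑ x ∈ Finset.univ.filter (fun e : E => δ' (Sum.inl e) = o'), s' (Sum.inl x)) =
          ε * ∑ x ∈ Finset.univ.filter (fun e : E' => δ' (Sum.inr e) = o'), s' (Sum.inr x)) →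
      ∃ ε : ℤ, (ε = 1 ∨ ε = -1) ∧ ∀ o : Ω,
        (∑ x ∈ Finset.univ.filter (fun e : E => δ (Sum.inl e) = o), s (Sum.inl x)) =
          ε * ∑ x ∈ Finset.univ.filter (fun e : E' => δ (Sum.inr e) = o), s (Sum.inr x)) := by
  classical
  -- membership in the image finset of a class
  have hδo : ∀ (o : Ω) (o' : Ω'),
      o' ∈ (Finset.univ.filter (fun z : E ⊕ E' => δ z = o)).image δ' →
      ∀ w : E ⊕ E', δ' w = o' → δ w = o := by
    intro o o' ho' w hw
    obtain ⟨z, hz, hz'⟩ := Finset.mem_image.mp ho'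
    simp only [Finset.mem_filter, Finset.mem_univ, true_and] at hz
    exact (href w z (hw.trans hz'.symm)).trans hz
  constructor
  · rintro ⟨o, ho⟩
    set S := (Finset.univ.filter (fun z : E ⊕ E' => δ z = o)).image δ' with hS
    have hne : ∃ e ∈ Finset.univ.filter (fun e : E => δ (Sum.inl e) = o),
        s (Sum.inl e) ≠ 0 := by
      by_contra h
      push_neg at h
      exact ho (Finset.sum_eq_zero h)
    obtain ⟨e₀, he₀, hs₀⟩ := hne
    simp only [Finset.mem_filter, Finset.mem_univ, true_and] at he₀
    have hclass : ∀ z : E ⊕ E', δ z = o → s z ≠ 0 := fun z hz h0 =>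
      hs₀ ((hfine (Sum.inl e₀) z (he₀.trans hz.symm)).mpr h0)
    rw [fiber_sum_imb Sum.inl δ δ' href _ o] at ho
    have heq : ∀ o' ∈ S,
        (∑ a ∈ Finset.univ.filter (fun a : E => δ' (Sum.inl a) = o'), s (Sum.inl a))
          = ∑ a ∈ Finset.univ.filter (fun a : E => δ' (Sum.inl a) = o'), s' (Sum.inl a) := by
      intro o' ho'
      refine Finset.sum_congr rfl fun a ha => ?_
      simp only [Finset.mem_filter, Finset.mem_univ, true_and] at ha
      exact (hext _ (hclass _ (hδo o o' ho' _ ha))).symm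
    rw [Finset.sum_congr rfl heq] at ho
    obtain ⟨o', _, h⟩ := Finset.exists_ne_zero_of_sum_ne_zero ho
    exact ⟨o', h⟩
  · rintro - ⟨ε, hεsign, hε⟩
    refine ⟨ε, hεsign, fun o => ?_⟩
    by_cases hor : ∃ z : E ⊕ E', δ z = o ∧ s z ≠ 0
    · obtain ⟨z₀, hz₀, hs₀⟩ := hor
      have hclass : ∀ z : E ⊕ E', δ z = o → s z ≠ 0 := fun z hz h0 =>
        hs₀ ((hfine z₀ z (hz₀.trans hz.symm)).mpr h0)
      set S := (Finset.univ.filter (fun z : E ⊕ E' => δ z = o)).image δ' with hS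
      rw [fiber_sum_imb Sum.inl δ δ' href _ o, fiber_sum_imb Sum.inr δ δ' href _ o]
      calc (∑ o' ∈ S, ∑ a ∈ Finset.univ.filter (fun a : E => δ' (Sum.inl a) = o'),
              s (Sum.inl a))
          = ∑ o' ∈ S, ∑ a ∈ Finset.univ.filter (fun a : E => δ' (Sum.inl a) = o'),
              s' (Sum.inl a) := by
            refine Finset.sum_congr rfl fun o' ho' => Finset.sum_congr rfl fun a ha => ?_
            simp only [Finset.mem_filter, Finset.mem_univ, true_and] at ha
            exact (hext _ (hclass _ (hδo o o' ho' _ ha))).symm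
        _ = ∑ o' ∈ S, ε * ∑ a ∈ Finset.univ.filter (fun a : E' => δ' (Sum.inr a) = o'),
              s' (Sum.inr a) := Finset.sum_congr rfl fun o' _ => hε o'
        _ = ε * ∑ o' ∈ S, ∑ a ∈ Finset.univ.filter (fun a : E' => δ' (Sum.inr a) = o'),
              s' (Sum.inr a) := (Finset.mul_sum _ _ _).symm
        _ = ε * ∑ o' ∈ S, ∑ a ∈ Finset.univ.filter (fun a : E' => δ' (Sum.inr a) = o'),
              s (Sum.inr a) := by
            congr 1
            refine Finset.sum_congr rfl fun o' ho' => Finset.sum_congr rfl fun a ha => ?_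
            simp only [Finset.mem_filter, Finset.mem_univ, true_and] at ha
            exact hext _ (hclass _ (hδo o o' ho' _ ha))
    · push_neg at hor
      have h1 : (∑ x ∈ Finset.univ.filter (fun e : E => δ (Sum.inl e) = o),
          s (Sum.inl x)) = 0 :=
        Finset.sum_eq_zero fun a ha => hor _ (by simpa using ha)
      have h2 : (∑ x ∈ Finset.univ.filter (fun e : E' => δ (Sum.inr e) = o),
          s (Sum.inr x)) = 0 :=
        Finset.sum_eq_zero fun a ha => hor _ (by simpa using ha)
      rw [h1, h2, mul_zero]
end

section
/- Let X be a tree of spaces over an oriented simplicial tree T, with distance d defined as the infimum of lengths of chains. Then: (a) d is a metric on X (the quotient pseudo-metric is a metric); (b) every ball of radius at most 1 in a vertex space is isometrically embedded in X, i.e. if p and q lie in a common ball of radius at most 1 of a vertex space X_v then d(p,q) equals the distance from p to q in X_v; and (c) every rung is isometrically embedded in X. -/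
/-- The data of a tree of spaces over an oriented simplicial tree: an oriented graph with
vertex set `V`, oriented edge set `E` and endpoint maps `ι`, `τ`; a metric space `X v` for
each vertex; an edge space `Xe e ⊆ X (ι e)` for each oriented edge; an attaching map
`α e : X (ι e) → X (τ e)` (only its restriction to `Xe e` is relevant) and a coarse inverse
`β e : X (τ e) → X (ι e)` of it. -/
structure TreeOfSpacesData where
  V : Type
  E : Type
  ι : E → V
  τ : E → V
  X : V → Type
  met : ∀ v, MetricSpace (X v)
  Xe : ∀ e, Set (X (ι e))
  α : ∀ e, X (ι e) → X (τ e)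
  β : ∀ e, X (τ e) → X (ι e)

namespace TreeOfSpacesData

instance (T : TreeOfSpacesData) (v : T.V) : MetricSpace (T.X v) := T.met v

/-- The condition that `β e` is a coarse inverse of `α e` on the edge space, uniformly over
all edges: this is the defining condition of a tree of spaces. -/
def IsTreeOfSpaces (T : TreeOfSpacesData) : Prop :=
  ∃ C : ℝ, 0 ≤ C ∧
    (∀ e, ∀ x ∈ T.Xe e, dist (T.β e (T.α e x)) x ≤ C) ∧
    (∀ e, ∀ y ∈ T.α e '' T.Xe e, dist (T.α e (T.β e y)) y ≤ C)

/-- The underlying simple graph of the oriented graph `(V, E, ι, τ)`. -/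
def graph (T : TreeOfSpacesData) : SimpleGraph T.V where
  Adj u v := u ≠ v ∧ ∃ e : T.E, (T.ι e = u ∧ T.τ e = v) ∨ (T.ι e = v ∧ T.τ e = u)
  symm := by
    constructor
    rintro u v ⟨hne, e, h⟩
    exact ⟨hne.symm, e, h.symm⟩
  loopless := by
    constructor
    rintro v ⟨hne, -⟩
    exact hne rfl

/-- The oriented graph `(V, E, ι, τ)` is an oriented simplicial tree: the underlying simple
graph is a tree, there are no loops, and there are no multiple (or oppositely repeated)
edges. -/
def IsOrientedSimplicialTree (T : TreeOfSpacesData) : Prop :=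
  T.graph.IsTree ∧ (∀ e : T.E, T.ι e ≠ T.τ e) ∧
    ∀ e e' : T.E,
      ((T.ι e = T.ι e' ∧ T.τ e = T.τ e') ∨ (T.ι e = T.τ e' ∧ T.τ e = T.ι e')) → e = e'

/-- The points of the total space of a tree of spaces: the points of the vertex spaces,
together with the interior points `(x, t)`, `0 < t < 1`, of the rungs `{x} × [0,1]` over the
points `x` of the edge spaces.  (The endpoints `(x,0)` and `(x,1)` of a rung are identified
with `x ∈ X (ι e)` and `α e x ∈ X (τ e)` respectively, so this is exactly the quotient of
the disjoint union defining the total space.) -/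
inductive Pt (T : TreeOfSpacesData) : Type
  | vert (v : T.V) (x : T.X v) : Pt T
  | rung (e : T.E) (x : T.X (T.ι e)) (hx : x ∈ T.Xe e) (t : ℝ)
      (ht0 : 0 < t) (ht1 : t < 1) : Pt T

/-- `PieceDist T p q r` holds when `p` and `q` lie in a common piece (a vertex space or a
rung) in which their distance is `r`. -/
inductive PieceDist (T : TreeOfSpacesData) : Pt T → Pt T → ℝ → Prop
  | vert (v : T.V) (x y : T.X v) :
      PieceDist T (.vert v x) (.vert v y) (dist x y)
  | rung_rung (e : T.E) (x : T.X (T.ι e)) (hx : x ∈ T.Xe e) (s t : ℝ)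
      (hs0 : 0 < s) (hs1 : s < 1) (ht0 : 0 < t) (ht1 : t < 1) :
      PieceDist T (.rung e x hx s hs0 hs1) (.rung e x hx t ht0 ht1) |s - t|
  | bot_rung (e : T.E) (x : T.X (T.ι e)) (hx : x ∈ T.Xe e) (t : ℝ)
      (ht0 : 0 < t) (ht1 : t < 1) :
      PieceDist T (.vert (T.ι e) x) (.rung e x hx t ht0 ht1) t
  | top_rung (e : T.E) (x : T.X (T.ι e)) (hx : x ∈ T.Xe e) (t : ℝ)
      (ht0 : 0 < t) (ht1 : t < 1) :
      PieceDist T (.vert (T.τ e) (T.α e x)) (.rung e x hx t ht0 ht1) (1 - t)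
  | bot_top (e : T.E) (x : T.X (T.ι e)) (hx : x ∈ T.Xe e) :
      PieceDist T (.vert (T.ι e) x) (.vert (T.τ e) (T.α e x)) 1
  | symm {p q : Pt T} {r : ℝ} : PieceDist T p q r → PieceDist T q p r

/-- `ChainDist T p q r` holds when there is a chain from `p` to `q`, each consecutive pair of
points lying in a common piece, of total length `r`. -/
inductive ChainDist (T : TreeOfSpacesData) : Pt T → Pt T → ℝ → Prop
  | single {p q : Pt T} {r : ℝ} : PieceDist T p q r → ChainDist T p q r
  | cons {p q r : Pt T} {c c' : ℝ} :
      PieceDist T p q c → ChainDist T q r c' → ChainDist T p r (c + c')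

/-- The distance on the total space of a tree of spaces: the infimum of the lengths of chains
joining two points (with value `∞` if there is no chain). -/
noncomputable def tdist (T : TreeOfSpacesData) (p q : Pt T) : ENNReal :=
  ⨅ r : {r : ℝ // ChainDist T p q r}, ENNReal.ofReal r.1

end TreeOfSpacesData

/-!
Every lower bound comes from a test function `Φ` on the total space which is 1-Lipschitz on
each piece: along a chain the increments of `Φ` are bounded by the lengths of the steps, so
`|Φ p - Φ q|` bounds every chain from `p` to `q`. Two families of test functions suffice, both
obtained by interpolating a function on the vertex spaces linearly along the rungs. The height
over an edge `e` is `0` on the vertex spaces on the `ι e` side of `e` in the tree and `1` on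
the other side; it measures rungs and separates points of different pieces. The distance to a
point `x ∈ X v`, capped at `2` and extended by `1` to the other vertex spaces, jumps by at most
`1` across a rung and records exactly the distances in `X v` up to `2`, the diameter of a ball of
radius `1`. The matching upper bounds are given by one-step chains.
-/

theorem SimpleGraph.Reachable.exists_adj_reachable_deleteEdges {V : Type*} {G : SimpleGraph V}
    {v w : V} (h : G.Reachable v w) (hvw : v ≠ w) :
    ∃ u, G.Adj v u ∧ (G.deleteEdges {s(v, u)}).Reachable u w := by
  obtain ⟨p, hp⟩ := h.exists_isPath
  cases p with
  | nil => exact absurd rfl hvw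
  | cons hadj q =>
    refine ⟨_, hadj, (q.toDeleteEdge _ fun hq => ?_).reachable⟩
    exact ((SimpleGraph.Walk.cons_isPath_iff hadj q).1 hp).2 (q.fst_mem_support_of_mem_edges hq)

theorem eq_of_min_dist_eq_zero {α : Type*} [MetricSpace α] {x y : α} {c : ℝ} (hc : 0 < c)
    (h : min (dist x y) c = 0) : x = y := by
  rcases min_choice (dist x y) c with h' | h' <;> rw [h'] at h
  · exact dist_eq_zero.1 h
  · exact absurd h hc.ne'

namespace TreeOfSpacesData

variable {T : TreeOfSpacesData}

section Chains

lemma PieceDist.nonneg {p q : T.Pt} {r : ℝ} (h : PieceDist T p q r) : 0 ≤ r := by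
  induction h with
  | vert => exact dist_nonneg
  | rung_rung => exact abs_nonneg _
  | bot_rung _ _ _ _ ht0 => exact ht0.le
  | top_rung _ _ _ _ _ ht1 => linarith
  | bot_top => exact zero_le_one
  | symm _ ih => exact ih

lemma pieceDist_self (p : T.Pt) : PieceDist T p p 0 := by
  cases p with
  | vert v x => simpa using PieceDist.vert v x x
  | rung e x hx t ht0 ht1 => simpa using PieceDist.rung_rung e x hx t t ht0 ht1 ht0 ht1

lemma ChainDist.nonneg {p q : T.Pt} {r : ℝ} (h : ChainDist T p q r) : 0 ≤ r := by
  induction h with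
  | single h => exact h.nonneg
  | cons h _ ih => exact add_nonneg h.nonneg ih

lemma ChainDist.trans {p q r : T.Pt} {a b : ℝ} (hpq : ChainDist T p q a)
    (hqr : ChainDist T q r b) : ChainDist T p r (a + b) := by
  induction hpq with
  | single h => exact .cons h hqr
  | cons h _ ih => rw [add_assoc]; exact .cons h (ih hqr)

lemma ChainDist.symm {p q : T.Pt} {a : ℝ} (h : ChainDist T p q a) : ChainDist T q p a := by
  induction h with
  | single h => exact .single h.symm
  | cons h _ ih => rw [add_comm]; exact ih.trans (.single h.symm)

lemma tdist_le_ofReal {p q : T.Pt} {r : ℝ} (h : ChainDist T p q r) :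
    T.tdist p q ≤ ENNReal.ofReal r :=
  iInf_le (fun r : {r : ℝ // ChainDist T p q r} => ENNReal.ofReal r.1) ⟨r, h⟩

lemma tdist_self (p : T.Pt) : T.tdist p p = 0 :=
  le_antisymm ((tdist_le_ofReal (.single (pieceDist_self p))).trans_eq ENNReal.ofReal_zero)
    zero_le

lemma tdist_comm (p q : T.Pt) : T.tdist p q = T.tdist q p :=
  le_antisymm (le_iInf fun r => tdist_le_ofReal r.2.symm)
    (le_iInf fun r => tdist_le_ofReal r.2.symm)

lemma tdist_triangle (p q r : T.Pt) : T.tdist p r ≤ T.tdist p q + T.tdist q r := by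
  unfold tdist
  rw [ENNReal.iInf_add]
  refine le_iInf fun a => ?_
  rw [ENNReal.add_iInf]
  exact le_iInf fun b =>
    (tdist_le_ofReal (a.2.trans b.2)).trans_eq (ENNReal.ofReal_add a.2.nonneg b.2.nonneg)

end Chains

section TestFunctions

def IsPieceLipschitz (T : TreeOfSpacesData) (Φ : T.Pt → ℝ) : Prop :=
  ∀ ⦃p q : T.Pt⦄ ⦃r : ℝ⦄, PieceDist T p q r → |Φ p - Φ q| ≤ r

variable {Φ : T.Pt → ℝ}

lemma IsPieceLipschitz.abs_sub_le_of_chainDist (hΦ : T.IsPieceLipschitz Φ) {p q : T.Pt} {r : ℝ}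
    (h : ChainDist T p q r) : |Φ p - Φ q| ≤ r := by
  induction h with
  | single h => exact hΦ h
  | @cons p q r c c' h _ ih =>
    calc |Φ p - Φ r| ≤ |Φ p - Φ q| + |Φ q - Φ r| := abs_sub_le _ _ _
      _ ≤ c + c' := add_le_add (hΦ h) ih

lemma IsPieceLipschitz.ofReal_abs_sub_le_tdist (hΦ : T.IsPieceLipschitz Φ) (p q : T.Pt) :
    ENNReal.ofReal |Φ p - Φ q| ≤ T.tdist p q :=
  le_iInf fun r => ENNReal.ofReal_le_ofReal (hΦ.abs_sub_le_of_chainDist r.2)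

lemma IsPieceLipschitz.eq_of_tdist_eq_zero (hΦ : T.IsPieceLipschitz Φ) {p q : T.Pt}
    (h : T.tdist p q = 0) : Φ p = Φ q := by
  have := hΦ.ofReal_abs_sub_le_tdist p q
  rwa [h, nonpos_iff_eq_zero, ENNReal.ofReal_eq_zero, abs_nonpos_iff, sub_eq_zero] at this

lemma tdist_eq_of_pieceDist {p q : T.Pt} {r : ℝ} (h : PieceDist T p q r)
    (hΦ : T.IsPieceLipschitz Φ) (hr : |Φ p - Φ q| = r) : T.tdist p q = ENNReal.ofReal r :=
  le_antisymm (tdist_le_ofReal (.single h)) (hr ▸ hΦ.ofReal_abs_sub_le_tdist p q)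

def interpolate (T : TreeOfSpacesData) (g : ∀ v, T.X v → ℝ) : T.Pt → ℝ
  | .vert v x => g v x
  | .rung e x _ t _ _ => (1 - t) * g (T.ι e) x + t * g (T.τ e) (T.α e x)

lemma isPieceLipschitz_interpolate {g : ∀ v, T.X v → ℝ} (hvert : ∀ v, LipschitzWith 1 (g v))
    (hedge : ∀ e x, |g (T.τ e) (T.α e x) - g (T.ι e) x| ≤ 1) :
    T.IsPieceLipschitz (T.interpolate g) := by
  intro p q r h
  induction h with
  | vert v x y => simpa [interpolate, ← Real.dist_eq] using (hvert v).dist_le_mul x y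
  | rung_rung e x _ s t =>
    calc _ = |s - t| * |g (T.τ e) (T.α e x) - g (T.ι e) x| := by
          rw [← abs_mul]; congr 1; simp only [interpolate]; ring
      _ ≤ |s - t| := mul_le_of_le_one_right (abs_nonneg _) (hedge e x)
  | bot_rung e x _ t ht0 =>
    calc _ = |t * (g (T.ι e) x - g (T.τ e) (T.α e x))| := by
          simp only [interpolate]; congr 1; ring
      _ = t * |g (T.τ e) (T.α e x) - g (T.ι e) x| := by
          rw [abs_mul, abs_of_pos ht0, abs_sub_comm]
      _ ≤ t := mul_le_of_le_one_right ht0.le (hedge e x)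
  | top_rung e x _ t _ ht1 =>
    have ht : 0 ≤ 1 - t := by linarith
    calc _ = |(1 - t) * (g (T.τ e) (T.α e x) - g (T.ι e) x)| := by
          simp only [interpolate]; congr 1; ring
      _ = (1 - t) * |g (T.τ e) (T.α e x) - g (T.ι e) x| := by rw [abs_mul, abs_of_nonneg ht]
      _ ≤ 1 - t := mul_le_of_le_one_right ht (hedge e x)
  | bot_top e x => rw [abs_sub_comm]; exact hedge e x
  | symm _ ih => rwa [abs_sub_comm]

end TestFunctions

section EdgeHeight

def InitialSide (T : TreeOfSpacesData) (e : T.E) (v : T.V) : Prop :=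
  (T.graph.deleteEdges {s(T.ι e, T.τ e)}).Reachable (T.ι e) v

open Classical in
noncomputable def height (T : TreeOfSpacesData) (e : T.E) (v : T.V) : ℝ :=
  if T.InitialSide e v then 0 else 1

noncomputable def edgeHeight (T : TreeOfSpacesData) (e : T.E) : T.Pt → ℝ :=
  T.interpolate fun v _ => T.height e v

lemma height_eq_zero_or_eq_one (e : T.E) (v : T.V) : T.height e v = 0 ∨ T.height e v = 1 := by
  unfold height; split_ifs <;> simp

lemma height_ne_of_mem_Ioo (e : T.E) (v : T.V) {t : ℝ} (ht0 : 0 < t) (ht1 : t < 1) :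
    T.height e v ≠ t := by
  rcases height_eq_zero_or_eq_one e v with h | h <;> rw [h] <;> linarith

lemma height_eq_zero_iff {e : T.E} {v : T.V} : T.height e v = 0 ↔ T.InitialSide e v := by
  unfold height; split_ifs with h <;> simp [h]

lemma height_eq_one_iff {e : T.E} {v : T.V} : T.height e v = 1 ↔ ¬ T.InitialSide e v := by
  unfold height; split_ifs with h <;> simp [h]

lemma not_initialSide_tau (hG : T.graph.IsAcyclic) {e : T.E} (he : T.ι e ≠ T.τ e) :
    ¬ T.InitialSide e (T.τ e) :=
  SimpleGraph.isBridge_iff.1 <|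
    SimpleGraph.isAcyclic_iff_forall_adj_isBridge.1 hG ⟨he, e, .inl ⟨rfl, rfl⟩⟩

lemma height_iota (e : T.E) : T.height e (T.ι e) = 0 :=
  height_eq_zero_iff.2 (SimpleGraph.Reachable.refl _)

lemma height_tau (hG : T.graph.IsAcyclic) {e : T.E} (he : T.ι e ≠ T.τ e) :
    T.height e (T.τ e) = 1 :=
  height_eq_one_iff.2 (not_initialSide_tau hG he)

lemma height_tau_eq_height_iota (htree : T.IsOrientedSimplicialTree) {e e' : T.E}
    (h : e' ≠ e) : T.height e (T.τ e') = T.height e (T.ι e') := by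
  have hadj : (T.graph.deleteEdges {s(T.ι e, T.τ e)}).Adj (T.ι e') (T.τ e') := by
    refine SimpleGraph.deleteEdges_adj.2 ⟨⟨htree.2.1 e', e', .inl ⟨rfl, rfl⟩⟩, fun hs => ?_⟩
    exact h (htree.2.2 e' e (Sym2.eq_iff.1 (Set.mem_singleton_iff.1 hs)))
  unfold height InitialSide
  congr 1
  exact propext ⟨fun hr => hr.trans hadj.symm.reachable, fun hr => hr.trans hadj.reachable⟩

lemma exists_height_ne (htree : T.IsOrientedSimplicialTree) {v w : T.V} (hvw : v ≠ w) :
    ∃ e, T.height e v ≠ T.height e w := by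
  obtain ⟨u, ⟨-, e, he⟩, hreach⟩ :=
    (htree.1.connected.preconnected v w).exists_adj_reachable_deleteEdges hvw
  have htau := not_initialSide_tau htree.1.isAcyclic (htree.2.1 e)
  refine ⟨e, ?_⟩
  rcases he with ⟨rfl, rfl⟩ | ⟨rfl, rfl⟩
  · have hw : ¬ T.InitialSide e w := fun hw => htau (hw.trans hreach.symm)
    rw [height_iota, height_eq_one_iff.2 hw]
    exact zero_ne_one
  · have hw : T.InitialSide e w := by rwa [InitialSide, Sym2.eq_swap]
    rw [height_eq_one_iff.2 htau, height_eq_zero_iff.2 hw]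
    exact one_ne_zero

lemma edgeHeight_vert (e : T.E) (v : T.V) (x : T.X v) :
    T.edgeHeight e (.vert v x) = T.height e v := rfl

lemma edgeHeight_rung_self (htree : T.IsOrientedSimplicialTree) (e : T.E) (x : T.X (T.ι e))
    (hx : x ∈ T.Xe e) (t : ℝ) (ht0 : 0 < t) (ht1 : t < 1) :
    T.edgeHeight e (.rung e x hx t ht0 ht1) = t := by
  simp [edgeHeight, interpolate, height_iota, height_tau htree.1.isAcyclic (htree.2.1 e)]

lemma edgeHeight_rung_of_ne (htree : T.IsOrientedSimplicialTree) {e e' : T.E} (h : e' ≠ e)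
    (x : T.X (T.ι e')) (hx : x ∈ T.Xe e') (t : ℝ) (ht0 : 0 < t) (ht1 : t < 1) :
    T.edgeHeight e (.rung e' x hx t ht0 ht1) = T.height e (T.ι e') := by
  simp only [edgeHeight, interpolate, height_tau_eq_height_iota htree h]
  ring

lemma isPieceLipschitz_edgeHeight (e : T.E) : T.IsPieceLipschitz (T.edgeHeight e) := by
  refine isPieceLipschitz_interpolate (fun v => LipschitzWith.const' _) fun e' _ => ?_
  rcases height_eq_zero_or_eq_one e (T.ι e') with h | h <;>
    rcases height_eq_zero_or_eq_one e (T.τ e') with h' | h' <;> norm_num [h, h']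

end EdgeHeight

section Radial

open Classical in
noncomputable def cappedDist (T : TreeOfSpacesData) (v : T.V) (x : T.X v) :
    ∀ w, T.X w → ℝ :=
  Function.update (fun _ _ => 1) v fun z => min (dist x z) 2

noncomputable def radial (T : TreeOfSpacesData) (v : T.V) (x : T.X v) : T.Pt → ℝ :=
  T.interpolate (T.cappedDist v x)

open Classical in
lemma cappedDist_self (v : T.V) (x : T.X v) :
    T.cappedDist v x v = fun z => min (dist x z) 2 :=
  Function.update_self ..

open Classical in
lemma cappedDist_of_ne {v w : T.V} (h : w ≠ v) (x : T.X v) :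
    T.cappedDist v x w = fun _ => 1 :=
  Function.update_of_ne h ..

lemma cappedDist_mem_Icc (v : T.V) (x : T.X v) (w : T.V) (z : T.X w) :
    T.cappedDist v x w z ∈ Set.Icc 0 2 := by
  obtain rfl | h := eq_or_ne w v
  · rw [cappedDist_self]
    exact ⟨le_min dist_nonneg zero_le_two, min_le_right _ _⟩
  · rw [cappedDist_of_ne h]
    norm_num

lemma isPieceLipschitz_radial (hloop : ∀ e, T.ι e ≠ T.τ e) (v : T.V) (x : T.X v) :
    T.IsPieceLipschitz (T.radial v x) := by
  refine isPieceLipschitz_interpolate (fun w => ?_) fun e z => ?_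
  · obtain rfl | h := eq_or_ne w v
    · rw [cappedDist_self]
      exact (LipschitzWith.dist_right x).min_const 2
    · rw [cappedDist_of_ne h]
      exact LipschitzWith.const' _
  · obtain ⟨hι0, hι2⟩ := cappedDist_mem_Icc v x (T.ι e) z
    obtain ⟨hτ0, hτ2⟩ := cappedDist_mem_Icc v x (T.τ e) (T.α e z)
    rw [abs_le]
    obtain hι | hι := eq_or_ne (T.ι e) v
    · rw [cappedDist_of_ne (hι ▸ (hloop e).symm)]
      constructor <;> linarith
    · rw [cappedDist_of_ne hι]
      constructor <;> linarith

lemma radial_vert_self (v : T.V) (x z : T.X v) :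
    T.radial v x (.vert v z) = min (dist x z) 2 := by
  simp [radial, interpolate, cappedDist_self]

lemma radial_rung_iota (hloop : ∀ e, T.ι e ≠ T.τ e) (e : T.E) (x z : T.X (T.ι e))
    (hz : z ∈ T.Xe e) (t : ℝ) (ht0 : 0 < t) (ht1 : t < 1) :
    T.radial (T.ι e) x (.rung e z hz t ht0 ht1) = (1 - t) * min (dist x z) 2 + t := by
  simp [radial, interpolate, cappedDist_self, cappedDist_of_ne (hloop e).symm]

end Radial

lemma edgeHeight_vert_ne_rung (htree : T.IsOrientedSimplicialTree) (v : T.V) (y : T.X v)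
    (e : T.E) (x : T.X (T.ι e)) (hx : x ∈ T.Xe e) (t : ℝ) (ht0 : 0 < t) (ht1 : t < 1) :
    T.edgeHeight e (.vert v y) ≠ T.edgeHeight e (.rung e x hx t ht0 ht1) := by
  rw [edgeHeight_vert, edgeHeight_rung_self htree]
  exact height_ne_of_mem_Ioo e v ht0 ht1

theorem eq_of_forall_isPieceLipschitz (htree : T.IsOrientedSimplicialTree) {p q : T.Pt}
    (h : ∀ Φ, T.IsPieceLipschitz Φ → Φ p = Φ q) : p = q := by
  have hheight e := h _ (isPieceLipschitz_edgeHeight e)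
  cases p with
  | vert v x =>
    cases q with
    | vert w y =>
      obtain rfl | hvw := eq_or_ne v w
      · have hxy := h _ (isPieceLipschitz_radial htree.2.1 v x)
        rw [radial_vert_self, radial_vert_self, dist_self, min_eq_left zero_le_two] at hxy
        rw [eq_of_min_dist_eq_zero zero_lt_two hxy.symm]
      · obtain ⟨e, he⟩ := exists_height_ne htree hvw
        exact absurd (hheight e) he
    | rung e y hy t ht0 ht1 => exact absurd (hheight e) (edgeHeight_vert_ne_rung htree v x e y hy t ht0 ht1)
  | rung e x hx s hs0 hs1 =>
    cases q with
    | vert w y => exact absurd (hheight e).symm (edgeHeight_vert_ne_rung htree w y e x hx s hs0 hs1)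
    | rung e' y hy t ht0 ht1 =>
      obtain rfl | he := eq_or_ne e' e
      · obtain rfl : s = t := by simpa only [edgeHeight_rung_self htree] using hheight e'
        have hxy := h _ (isPieceLipschitz_radial htree.2.1 (T.ι e') x)
        rw [radial_rung_iota htree.2.1, radial_rung_iota htree.2.1, dist_self,
          min_eq_left zero_le_two, mul_zero, zero_add, right_eq_add,
          mul_eq_zero, sub_eq_zero] at hxy
        obtain rfl := eq_of_min_dist_eq_zero zero_lt_two (hxy.resolve_left hs1.ne')
        rfl
      · have hst := hheight e
        rw [edgeHeight_rung_self htree, edgeHeight_rung_of_ne htree he] at hst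
        exact absurd hst.symm (height_ne_of_mem_Ioo e _ hs0 hs1)

end TreeOfSpacesData

open TreeOfSpacesData in
theorem treeOfSpaces_dist_is_metric_general (T : TreeOfSpacesData)
    (htree : T.IsOrientedSimplicialTree) :
    -- (a) the quotient pseudo-metric is a metric
    ((∀ p : T.Pt, T.tdist p p = 0) ∧
     (∀ p q : T.Pt, T.tdist p q = T.tdist q p) ∧
     (∀ p q r : T.Pt, T.tdist p r ≤ T.tdist p q + T.tdist q r) ∧
     (∀ p q : T.Pt, T.tdist p q = 0 → p = q)) ∧
    -- (b) balls of radius ≤ 1 in vertex spaces are isometrically embedded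
    (∀ (v : T.V) (x y z : T.X v) (r : ℝ), r ≤ 1 → dist z x ≤ r → dist z y ≤ r →
      T.tdist (.vert v x) (.vert v y) = ENNReal.ofReal (dist x y)) ∧
    -- (c) rungs are isometrically embedded
    (∀ (e : T.E) (x : T.X (T.ι e)) (hx : x ∈ T.Xe e),
      (∀ (s t : ℝ) (hs0 : 0 < s) (hs1 : s < 1) (ht0 : 0 < t) (ht1 : t < 1),
        T.tdist (.rung e x hx s hs0 hs1) (.rung e x hx t ht0 ht1) =
          ENNReal.ofReal |s - t|) ∧
      (∀ (t : ℝ) (ht0 : 0 < t) (ht1 : t < 1),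
        T.tdist (.vert (T.ι e) x) (.rung e x hx t ht0 ht1) = ENNReal.ofReal t ∧
        T.tdist (.vert (T.τ e) (T.α e x)) (.rung e x hx t ht0 ht1) =
          ENNReal.ofReal (1 - t)) ∧
      T.tdist (.vert (T.ι e) x) (.vert (T.τ e) (T.α e x)) = 1) := by
  have htau e : T.height e (T.τ e) = 1 := height_tau htree.1.isAcyclic (htree.2.1 e)
  refine ⟨⟨tdist_self, tdist_comm, tdist_triangle, fun p q h =>
    eq_of_forall_isPieceLipschitz htree fun Φ hΦ => hΦ.eq_of_tdist_eq_zero h⟩, ?_,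
    fun e x hx => ⟨fun s t hs0 hs1 ht0 ht1 => ?_, fun t ht0 ht1 => ⟨?_, ?_⟩, ?_⟩⟩
  · intro v x y z r hr hzx hzy
    have hxy : dist x y ≤ 2 := by linarith [dist_triangle_left x y z]
    refine tdist_eq_of_pieceDist (.vert v x y) (isPieceLipschitz_radial htree.2.1 v x) ?_
    simp [radial_vert_self, min_eq_left hxy]
  · refine tdist_eq_of_pieceDist (.rung_rung e x hx s t hs0 hs1 ht0 ht1)
      (isPieceLipschitz_edgeHeight e) ?_
    rw [edgeHeight_rung_self htree, edgeHeight_rung_self htree]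
  · refine tdist_eq_of_pieceDist (.bot_rung e x hx t ht0 ht1) (isPieceLipschitz_edgeHeight e) ?_
    simp [edgeHeight_vert, edgeHeight_rung_self htree, height_iota, ht0.le]
  · refine tdist_eq_of_pieceDist (.top_rung e x hx t ht0 ht1) (isPieceLipschitz_edgeHeight e) ?_
    rw [edgeHeight_vert, edgeHeight_rung_self htree, htau, abs_of_pos (by linarith)]
  · simpa using tdist_eq_of_pieceDist (.bot_top e x hx) (isPieceLipschitz_edgeHeight e)
      (by simp [edgeHeight_vert, height_iota, htau])

open TreeOfSpacesData in
/-- The chain-length distance on the total space of a tree of spaces: (a) is a metric (the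
quotient pseudo-metric is reflexive, symmetric, satisfies the triangle inequality, and
separates points); (b) balls of radius at most 1 in vertex spaces are isometrically embedded;
(c) rungs are isometrically embedded. -/
theorem treeOfSpaces_dist_is_metric (T : TreeOfSpacesData)
    (htree : T.IsOrientedSimplicialTree) (hT : T.IsTreeOfSpaces) :
    -- (a) the quotient pseudo-metric is a metric
    ((∀ p : T.Pt, T.tdist p p = 0) ∧
     (∀ p q : T.Pt, T.tdist p q = T.tdist q p) ∧
     (∀ p q r : T.Pt, T.tdist p r ≤ T.tdist p q + T.tdist q r) ∧
     (∀ p q : T.Pt, T.tdist p q = 0 → p = q)) ∧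
    -- (b) balls of radius ≤ 1 in vertex spaces are isometrically embedded
    (∀ (v : T.V) (x y z : T.X v) (r : ℝ), r ≤ 1 → dist z x ≤ r → dist z y ≤ r →
      T.tdist (.vert v x) (.vert v y) = ENNReal.ofReal (dist x y)) ∧
    -- (c) rungs are isometrically embedded
    (∀ (e : T.E) (x : T.X (T.ι e)) (hx : x ∈ T.Xe e),
      (∀ (s t : ℝ) (hs0 : 0 < s) (hs1 : s < 1) (ht0 : 0 < t) (ht1 : t < 1),
        T.tdist (.rung e x hx s hs0 hs1) (.rung e x hx t ht0 ht1) =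
          ENNReal.ofReal |s - t|) ∧
      (∀ (t : ℝ) (ht0 : 0 < t) (ht1 : t < 1),
        T.tdist (.vert (T.ι e) x) (.rung e x hx t ht0 ht1) = ENNReal.ofReal t ∧
        T.tdist (.vert (T.τ e) (T.α e x)) (.rung e x hx t ht0 ht1) =
          ENNReal.ofReal (1 - t)) ∧
      T.tdist (.vert (T.ι e) x) (.vert (T.τ e) (T.α e x)) = 1) :=
  treeOfSpaces_dist_is_metric_general T htree
end
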